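/- arXiv:2405.19924 — 13 statements merged into one kernel-verified Lean document; each statement's English description precedes it below -/
import Mathlib

section
/- Let p : E → B and p' : E' → B' be continuous maps, and let α : E → E' and β : B → B' be homotopy equivalences such that p' ∘ α is homotopic to β ∘ p. Then secat(p) = secat(p'). -/
open ContinuousMap Set

noncomputable section

/-- The inclusion of a subset `U ⊆ B` as a continuous map. -/
def restr {B : Type*} [TopologicalSpace B] (U : Set B) : C(U, B) :=
  ⟨Subtype.val, continuous_subtype_val⟩

/-- The sectional category of a continuous map `p : E → B`: the least `n` such that `B`
admits a cover by `n+1` open subsets, each admitting a continuous local homotopy section. -/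
def secat {E B : Type*} [TopologicalSpace E] [TopologicalSpace B] (p : C(E, B)) : ℕ∞ :=
  sInf {n : ℕ∞ | ∃ k : ℕ, n = (k : ℕ∞) ∧ ∃ U : Fin (k + 1) → Set B,
    (∀ i, IsOpen (U i)) ∧ (⋃ i, U i) = Set.univ ∧
    ∀ i, ∃ s : C(U i, E), (p.comp s).Homotopic (restr (U i))}

/-- A continuous map is a homotopy equivalence if it has a homotopy inverse. -/
def IsHtpyEquiv {X Y : Type*} [TopologicalSpace X] [TopologicalSpace Y] (f : C(X, Y)) : Prop :=
  ∃ g : C(Y, X), (g.comp f).Homotopic (ContinuousMap.id X) ∧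
    (f.comp g).Homotopic (ContinuousMap.id Y)


lemma secat_le_aux {E B E' B' : Type*} [TopologicalSpace E] [TopologicalSpace B]
    [TopologicalSpace E'] [TopologicalSpace B']
    (p : C(E, B)) (p' : C(E', B')) (α : C(E, E')) (β : C(B, B')) (γ : C(B', B))
    (hγ : (β.comp γ).Homotopic (ContinuousMap.id B'))
    (hcomm : (p'.comp α).Homotopic (β.comp p)) :
    secat p' ≤ secat p := by
  apply sInf_le_sInf
  rintro n ⟨k, rfl, U, hop, hcov, hsec⟩
  refine ⟨k, rfl, fun i => γ ⁻¹' (U i), fun i => (hop i).preimage γ.continuous, ?_, ?_⟩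
  · ext b'
    simp only [mem_iUnion, mem_preimage, mem_univ, iff_true]
    have : γ b' ∈ ⋃ i, U i := hcov ▸ mem_univ _
    exact mem_iUnion.mp this
  · intro i
    obtain ⟨s, hs⟩ := hsec i
    have hc : Continuous fun x : (γ ⁻¹' (U i) : Set B') => (⟨γ x.1, x.2⟩ : U i) := by
      apply Continuous.subtype_mk
      exact γ.continuous.comp continuous_subtype_val
    set ρ : C((γ ⁻¹' (U i) : Set B'), (U i : Set B)) := ⟨_, hc⟩ with hρ
    refine ⟨α.comp (s.comp ρ), ?_⟩
    have h1 : (p'.comp (α.comp (s.comp ρ))).Homotopic ((β.comp p).comp (s.comp ρ)) :=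
      ContinuousMap.Homotopic.comp hcomm (ContinuousMap.Homotopic.refl (s.comp ρ))
    have h2 : ((β.comp p).comp (s.comp ρ)).Homotopic (β.comp ((restr (U i)).comp ρ)) :=
      ContinuousMap.Homotopic.comp (ContinuousMap.Homotopic.refl β) (ContinuousMap.Homotopic.comp hs (ContinuousMap.Homotopic.refl ρ))
    have h3 : β.comp ((restr (U i)).comp ρ) = (β.comp γ).comp (restr (γ ⁻¹' (U i))) := rfl
    have h4 : ((β.comp γ).comp (restr (γ ⁻¹' (U i)))).Homotopic (restr (γ ⁻¹' (U i))) := by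
      have := ContinuousMap.Homotopic.comp hγ (ContinuousMap.Homotopic.refl (restr (γ ⁻¹' (U i))))
      rwa [ContinuousMap.id_comp] at this
    exact (h1.trans h2).trans (h3 ▸ h4)

theorem stmt0 {E B E' B' : Type*} [TopologicalSpace E] [TopologicalSpace B]
    [TopologicalSpace E'] [TopologicalSpace B']
    (p : C(E, B)) (p' : C(E', B')) (α : C(E, E')) (β : C(B, B'))
    (hα : IsHtpyEquiv α) (hβ : IsHtpyEquiv β)
    (hcomm : (p'.comp α).Homotopic (β.comp p)) :
    secat p = secat p' := by
  obtain ⟨gα, hgα1, hgα2⟩ := hα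
  obtain ⟨gβ, hgβ1, hgβ2⟩ := hβ
  have hcomm' : (p.comp gα).Homotopic (gβ.comp p') := by
    have s1 : (p.comp gα).Homotopic ((gβ.comp β).comp (p.comp gα)) := by
      have := (ContinuousMap.Homotopic.comp hgβ1 (ContinuousMap.Homotopic.refl (p.comp gα))).symm
      rwa [ContinuousMap.id_comp] at this
    have s2 : ((gβ.comp β).comp (p.comp gα)).Homotopic (gβ.comp ((p'.comp α).comp gα)) :=
      ContinuousMap.Homotopic.comp (ContinuousMap.Homotopic.refl gβ)
        (ContinuousMap.Homotopic.comp hcomm.symm (ContinuousMap.Homotopic.refl gα))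
    have h3 : gβ.comp ((p'.comp α).comp gα) = (gβ.comp p').comp (α.comp gα) := rfl
    have s4 : ((gβ.comp p').comp (α.comp gα)).Homotopic (gβ.comp p') := by
      have := ContinuousMap.Homotopic.comp (ContinuousMap.Homotopic.refl (gβ.comp p')) hgα2
      rwa [ContinuousMap.comp_id] at this
    exact (s1.trans s2).trans (h3 ▸ s4)
  exact le_antisymm
    (secat_le_aux p' p gα gβ β hgβ1 hcomm')
    (secat_le_aux p p' α β gβ hgβ2 hcomm)
end
end

section
/- Let φ : K → X and p : A → X be continuous maps, let E_{φ,p} = {(k,a,θ) ∈ K × A × X^I : θ(0) = φ(k), θ(1) = p(a)} be their standard homotopy pullback, and let p̄ : E_{φ,p} → K be the projection (k,a,θ) ↦ k. Then secat_φ(p) = secat(p̄). -/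
open ContinuousMap Set

noncomputable section

/-- The sectional category of `p : A → X` relative to `φ : K → X`: the least `n` such that `K`
admits a cover by `n+1` open `φ`-sectional subsets. -/
def relSecat {K X A : Type*} [TopologicalSpace K] [TopologicalSpace X] [TopologicalSpace A]
    (φ : C(K, X)) (p : C(A, X)) : ℕ∞ :=
  sInf {n : ℕ∞ | ∃ k : ℕ, n = (k : ℕ∞) ∧ ∃ U : Fin (k + 1) → Set K,
    (∀ i, IsOpen (U i)) ∧ (⋃ i, U i) = Set.univ ∧
    ∀ i, ∃ s : C(U i, A), (p.comp s).Homotopic (φ.comp (restr (U i)))}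

lemma key_iff {K X A : Type*} [TopologicalSpace K] [TopologicalSpace X] [TopologicalSpace A]
    (φ : C(K, X)) (p : C(A, X)) (U : Set K) :
    (∃ s : C(U, A), (p.comp s).Homotopic (φ.comp (restr U))) ↔
    (∃ s : C(U, {z : K × A × C(unitInterval, X) // z.2.2 0 = φ z.1 ∧ z.2.2 1 = p z.2.1}),
      ((⟨fun z => z.val.1, continuous_subtype_val.fst⟩ :
        C({z : K × A × C(unitInterval, X) // z.2.2 0 = φ z.1 ∧ z.2.2 1 = p z.2.1}, K)).comp
        s).Homotopic (restr U)) := by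
  constructor
  · rintro ⟨s, ⟨H⟩⟩
    -- build family of paths from the homotopy, reversed in time
    let H' : C(↥U × unitInterval, X) :=
      ⟨fun q => H (unitInterval.symm q.2, q.1),
        H.continuous.comp ((unitInterval.continuous_symm.comp continuous_snd).prodMk
          continuous_fst)⟩
    let θ : C(↥U, C(unitInterval, X)) := H'.curry
    have hθ0 : ∀ u : U, θ u 0 = φ u := fun u => by
      show H (unitInterval.symm 0, u) = φ ↑u
      rw [unitInterval.symm_zero]
      exact H.map_one_left u
    have hθ1 : ∀ u : U, θ u 1 = p (s u) := fun u => by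
      show H (unitInterval.symm 1, u) = p (s u)
      rw [unitInterval.symm_one]
      exact H.map_zero_left u
    let s' : C(↥U, {z : K × A × C(unitInterval, X) // z.2.2 0 = φ z.1 ∧ z.2.2 1 = p z.2.1}) :=
      ⟨fun u => ⟨((u : K), s u, θ u), hθ0 u, hθ1 u⟩,
        (continuous_subtype_val.prodMk ((map_continuous s).prodMk
          (map_continuous θ))).subtype_mk _⟩
    refine ⟨s', ?_⟩
    have heq : (⟨fun z => z.val.1, continuous_subtype_val.fst⟩ :
        C({z : K × A × C(unitInterval, X) // z.2.2 0 = φ z.1 ∧ z.2.2 1 = p z.2.1}, K)).comp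
        s' = restr U := by ext u; rfl
    rw [heq]
  · rintro ⟨s, ⟨G⟩⟩
    -- section into A: second component
    have hs2 : Continuous fun u : U => (s u).val.2.1 :=
      ((map_continuous s).subtype_val).snd.fst
    have hsθ : Continuous fun u : U => (s u).val.2.2 :=
      ((map_continuous s).subtype_val).snd.snd
    refine ⟨⟨fun u => (s u).val.2.1, hs2⟩, ?_⟩
    -- homotopy 1: from p ∘ s₂ to φ ∘ (p̄ ∘ s), via the reversed paths θ
    let H1 : ContinuousMap.Homotopy
        (p.comp ⟨fun u : U => (s u).val.2.1, hs2⟩)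
        (φ.comp ((⟨fun z => z.val.1, continuous_subtype_val.fst⟩ :
          C({z : K × A × C(unitInterval, X) // z.2.2 0 = φ z.1 ∧ z.2.2 1 = p z.2.1}, K)).comp
          s)) :=
      { toFun := fun q => (s q.2).val.2.2 (unitInterval.symm q.1)
        continuous_toFun := continuous_eval.comp
          ((hsθ.comp continuous_snd).prodMk
            (unitInterval.continuous_symm.comp continuous_fst))
        map_zero_left := fun u => by
          show (s u).val.2.2 (unitInterval.symm 0) = _
          rw [unitInterval.symm_zero]
          exact (s u).prop.2
        map_one_left := fun u => by
          show (s u).val.2.2 (unitInterval.symm 1) = _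
          rw [unitInterval.symm_one]
          exact (s u).prop.1 }
    -- homotopy 2: φ composed with G
    exact ⟨H1.trans ((ContinuousMap.Homotopy.refl φ).comp G)⟩

theorem stmt2 {K X A : Type*} [TopologicalSpace K] [TopologicalSpace X] [TopologicalSpace A]
    (φ : C(K, X)) (p : C(A, X)) :
    relSecat φ p =
      secat (⟨fun z : {z : K × A × C(unitInterval, X) // z.2.2 0 = φ z.1 ∧ z.2.2 1 = p z.2.1} =>
        z.val.1, continuous_subtype_val.fst⟩ :
        C({z : K × A × C(unitInterval, X) // z.2.2 0 = φ z.1 ∧ z.2.2 1 = p z.2.1}, K)) := by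
  unfold relSecat secat
  apply congrArg sInf
  ext n
  constructor <;> rintro ⟨k, rfl, U, hO, hc, hs⟩ <;>
    exact ⟨k, rfl, U, hO, hc, fun i => by
      first
        | exact (key_iff φ p (U i)).mp (hs i)
        | exact (key_iff φ p (U i)).mpr (hs i)⟩
end
end

section
/- Let φ, ψ : X → Y be continuous maps, let P(φ,ψ) = {(x,α) ∈ X × Y^I : α(0) = φ(x), α(1) = ψ(x)}, and let π : P(φ,ψ) → X be the projection (x,α) ↦ x. Then the homotopic distance satisfies D(φ,ψ) = secat(π). -/
open ContinuousMap Set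

noncomputable section

/-- The homotopic distance between two continuous maps `φ ψ : X → Y`: the least `n` such that
`X` admits a cover by `n+1` open subsets on which the restrictions of `φ` and `ψ` are
homotopic. -/
def homDist {X Y : Type*} [TopologicalSpace X] [TopologicalSpace Y] (φ ψ : C(X, Y)) : ℕ∞ :=
  sInf {n : ℕ∞ | ∃ k : ℕ, n = (k : ℕ∞) ∧ ∃ U : Fin (k + 1) → Set X,
    (∀ i, IsOpen (U i)) ∧ (⋃ i, U i) = Set.univ ∧
    ∀ i, (φ.comp (restr (U i))).Homotopic (ψ.comp (restr (U i)))}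

section Aux

variable {X Y : Type*} [TopologicalSpace X] [TopologicalSpace Y] (φ ψ : C(X, Y))

/-- The path fibration projection. -/
def pfib : C({z : X × C(unitInterval, Y) // z.2 0 = φ z.1 ∧ z.2 1 = ψ z.1}, X) :=
  ⟨fun z => z.val.1, continuous_subtype_val.fst⟩

lemma key (U : Set X) :
    (φ.comp (restr U)).Homotopic (ψ.comp (restr U)) ↔
      ∃ s : C(U, {z : X × C(unitInterval, Y) // z.2 0 = φ z.1 ∧ z.2 1 = ψ z.1}),
        ((pfib φ ψ).comp s).Homotopic (restr U) := by
  constructor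
  · rintro ⟨H⟩
    let F : C(U, C(unitInterval, Y)) :=
      ContinuousMap.curry (H.toContinuousMap.comp ⟨Prod.swap, continuous_swap⟩)
    refine ⟨⟨fun u => ⟨(u.val, F u), ?_, ?_⟩, ?_⟩, ?_⟩
    · simpa [F, restr] using H.apply_zero u
    · simpa [F, restr] using H.apply_one u
    · exact Continuous.subtype_mk (continuous_subtype_val.prodMk F.continuous) _
    · have : (pfib φ ψ).comp ⟨fun u => (⟨(u.val, F u), by simpa [F, restr] using H.apply_zero u,
          by simpa [F, restr] using H.apply_one u⟩ :
          {z : X × C(unitInterval, Y) // z.2 0 = φ z.1 ∧ z.2 1 = ψ z.1}),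
          Continuous.subtype_mk (continuous_subtype_val.prodMk F.continuous) _⟩ = restr U := by
        ext u; rfl
      rw [this]
  · rintro ⟨s, ⟨G⟩⟩
    set q : C(U, X) := (pfib φ ψ).comp s with hq
    have hK : (φ.comp q).Homotopic (ψ.comp q) := by
      refine ⟨⟨⟨fun p => (s p.2).val.2 p.1, ?_⟩, ?_, ?_⟩⟩
      · exact (ContinuousEval.continuous_eval (X := unitInterval) (Y := Y)).comp
          ((continuous_subtype_val.snd.comp (s.continuous.comp continuous_snd)).prodMk
            continuous_fst)
      · intro u; exact (s u).prop.1
      · intro u; exact (s u).prop.2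
    have h1 : (φ.comp q).Homotopic (φ.comp (restr U)) :=
      ContinuousMap.Homotopic.comp (ContinuousMap.Homotopic.refl φ) ⟨G⟩
    have h2 : (ψ.comp q).Homotopic (ψ.comp (restr U)) :=
      ContinuousMap.Homotopic.comp (ContinuousMap.Homotopic.refl ψ) ⟨G⟩
    exact h1.symm.trans (hK.trans h2)

end Aux

theorem stmt4 {X Y : Type*} [TopologicalSpace X] [TopologicalSpace Y] (φ ψ : C(X, Y)) :
    homDist φ ψ =
      secat (⟨fun z : {z : X × C(unitInterval, Y) // z.2 0 = φ z.1 ∧ z.2 1 = ψ z.1} =>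
        z.val.1, continuous_subtype_val.fst⟩ :
        C({z : X × C(unitInterval, Y) // z.2 0 = φ z.1 ∧ z.2 1 = ψ z.1}, X)) := by
  show homDist φ ψ = secat (pfib φ ψ)
  unfold homDist secat
  congr 1
  ext n
  simp only [Set.mem_setOf_eq]
  constructor
  · rintro ⟨k, rfl, U, hopen, hcov, h⟩
    exact ⟨k, rfl, U, hopen, hcov, fun i => (key φ ψ (U i)).mp (h i)⟩
  · rintro ⟨k, rfl, U, hopen, hcov, h⟩
    exact ⟨k, rfl, U, hopen, hcov, fun i => (key φ ψ (U i)).mpr (h i)⟩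
end
end

section
/- Let φ : K → X, p : A → X, ψ : L → Y, q : B → Y be continuous maps, and let α : K → L, β : X → Y, γ : A → B be homotopy equivalences such that ψ ∘ α is homotopic to β ∘ φ and q ∘ γ is homotopic to β ∘ p. Then secat_φ(p) = secat_ψ(q). -/
open ContinuousMap Set

noncomputable section

lemma conj_htpy {W X Y Z : Type*} [TopologicalSpace W] [TopologicalSpace X] [TopologicalSpace Y]
    [TopologicalSpace Z] (f : C(W, X)) (g : C(Z, Y)) (β : C(X, Y)) (β' : C(Y, X))
    (δ : C(W, Z)) (δ' : C(Z, W))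
    (h : (g.comp δ).Homotopic (β.comp f))
    (hβ : (β'.comp β).Homotopic (ContinuousMap.id X))
    (hδ : (δ.comp δ').Homotopic (ContinuousMap.id Z)) :
    (f.comp δ').Homotopic (β'.comp g) := by
  have e2 : (β'.comp (β.comp f)).Homotopic f := by
    have := ContinuousMap.Homotopic.comp hβ (ContinuousMap.Homotopic.refl f)
    simpa [ContinuousMap.comp_assoc] using this
  have e3 : (β'.comp (g.comp δ)).Homotopic f :=
    (ContinuousMap.Homotopic.comp (ContinuousMap.Homotopic.refl β') h).trans e2
  have e4 : ((β'.comp (g.comp δ)).comp δ').Homotopic (f.comp δ') :=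
    ContinuousMap.Homotopic.comp e3 (ContinuousMap.Homotopic.refl δ')
  have e5 : ((β'.comp g).comp (δ.comp δ')).Homotopic (β'.comp g) := by
    have := ContinuousMap.Homotopic.comp (ContinuousMap.Homotopic.refl (β'.comp g)) hδ
    simpa using this
  have eq1 : (β'.comp (g.comp δ)).comp δ' = (β'.comp g).comp (δ.comp δ') := by
    simp [ContinuousMap.comp_assoc]
  rw [eq1] at e4
  exact (e5.symm.trans e4).symm

lemma secat_le {K X A L Y B : Type*} [TopologicalSpace K] [TopologicalSpace X] [TopologicalSpace A]
    [TopologicalSpace L] [TopologicalSpace Y] [TopologicalSpace B]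
    (φ : C(K, X)) (p : C(A, X)) (ψ : C(L, Y)) (q : C(B, Y))
    (α : C(K, L)) (β : C(X, Y)) (β' : C(Y, X)) (γ' : C(B, A))
    (h1 : (ψ.comp α).Homotopic (β.comp φ))
    (hβ : (β'.comp β).Homotopic (ContinuousMap.id X))
    (hpq : (p.comp γ').Homotopic (β'.comp q)) :
    relSecat φ p ≤ relSecat ψ q := by
  apply sInf_le_sInf
  rintro n ⟨k, rfl, U, hUopen, hUcov, hsec⟩
  refine ⟨k, rfl, fun i => α ⁻¹' (U i), fun i => (hUopen i).preimage α.continuous, ?_, ?_⟩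
  · rw [← Set.preimage_iUnion, hUcov, Set.preimage_univ]
  · intro i
    obtain ⟨s, hs⟩ := hsec i
    set V : Set K := α ⁻¹' (U i) with hV
    have hcont : Continuous fun x : V => (⟨α x, x.2⟩ : U i) :=
      Continuous.subtype_mk (α.continuous.comp continuous_subtype_val) _
    set αr : C(V, U i) := ⟨fun x => ⟨α x, x.2⟩, hcont⟩ with hαr
    refine ⟨γ'.comp (s.comp αr), ?_⟩
    have step1 : (p.comp (γ'.comp (s.comp αr))).Homotopic ((β'.comp q).comp (s.comp αr)) := by
      have := ContinuousMap.Homotopic.comp hpq (ContinuousMap.Homotopic.refl (s.comp αr))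
      simpa [ContinuousMap.comp_assoc] using this
    have step2 : ((β'.comp q).comp (s.comp αr)).Homotopic
        ((β'.comp (ψ.comp (restr (U i)))).comp αr) := by
      have h' : ((q.comp s).comp αr).Homotopic ((ψ.comp (restr (U i))).comp αr) :=
        ContinuousMap.Homotopic.comp hs (ContinuousMap.Homotopic.refl αr)
      have := ContinuousMap.Homotopic.comp (ContinuousMap.Homotopic.refl β') h'
      simpa [ContinuousMap.comp_assoc] using this
    have eqr : (restr (U i)).comp αr = α.comp (restr V) := rfl
    have step3 : (β'.comp (ψ.comp (restr (U i)))).comp αr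
        = (β'.comp (ψ.comp α)).comp (restr V) := by
      simp [ContinuousMap.comp_assoc, ← eqr]
    have step4 : ((β'.comp (ψ.comp α)).comp (restr V)).Homotopic
        ((β'.comp (β.comp φ)).comp (restr V)) := by
      exact ContinuousMap.Homotopic.comp
        ((ContinuousMap.Homotopic.comp (ContinuousMap.Homotopic.refl β') h1)) (ContinuousMap.Homotopic.refl (restr V))
    have step5 : ((β'.comp (β.comp φ)).comp (restr V)).Homotopic (φ.comp (restr V)) := by
      have h' : (β'.comp (β.comp φ)).Homotopic φ := by
        have := ContinuousMap.Homotopic.comp hβ (ContinuousMap.Homotopic.refl φ)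
        simpa [ContinuousMap.comp_assoc] using this
      exact ContinuousMap.Homotopic.comp h' (ContinuousMap.Homotopic.refl (restr V))
    exact ((step1.trans step2).trans (step3 ▸ step4)).trans step5

theorem stmt5 {K X A L Y B : Type*} [TopologicalSpace K] [TopologicalSpace X] [TopologicalSpace A]
    [TopologicalSpace L] [TopologicalSpace Y] [TopologicalSpace B]
    (φ : C(K, X)) (p : C(A, X)) (ψ : C(L, Y)) (q : C(B, Y))
    (α : C(K, L)) (β : C(X, Y)) (γ : C(A, B))
    (hα : IsHtpyEquiv α) (hβ : IsHtpyEquiv β) (hγ : IsHtpyEquiv γ)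
    (h1 : (ψ.comp α).Homotopic (β.comp φ)) (h2 : (q.comp γ).Homotopic (β.comp p)) :
    relSecat φ p = relSecat ψ q := by
  obtain ⟨α', hα1, hα2⟩ := hα
  obtain ⟨β', hβ1, hβ2⟩ := hβ
  obtain ⟨γ', hγ1, hγ2⟩ := hγ
  have hpq : (p.comp γ').Homotopic (β'.comp q) := conj_htpy p q β β' γ γ' h2 hβ1 hγ2
  have h1' : (φ.comp α').Homotopic (β'.comp ψ) := conj_htpy φ ψ β β' α α' h1 hβ1 hα2
  apply le_antisymm
  · exact secat_le φ p ψ q α β β' γ' h1 hβ1 hpq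
  · exact secat_le ψ q φ p α' β' β γ h1' hβ2 h2
end
end

section
/- Let φ : K → X, ψ : K → Y, p : A → X, q : B → Y be continuous maps, and suppose there exist continuous maps β : X → Y and γ : A → B such that ψ is homotopic to β ∘ φ and q ∘ γ is homotopic to β ∘ p. Then secat_ψ(q) ≤ secat_φ(p). -/
open ContinuousMap Set

noncomputable section

theorem stmt6 {K X Y A B : Type*} [TopologicalSpace K] [TopologicalSpace X] [TopologicalSpace Y]
    [TopologicalSpace A] [TopologicalSpace B]
    (φ : C(K, X)) (ψ : C(K, Y)) (p : C(A, X)) (q : C(B, Y))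
    (β : C(X, Y)) (γ : C(A, B))
    (h1 : ψ.Homotopic (β.comp φ)) (h2 : (q.comp γ).Homotopic (β.comp p)) :
    relSecat ψ q ≤ relSecat φ p := by
  apply sInf_le_sInf
  rintro n ⟨k, rfl, U, hopen, hcov, hsec⟩
  refine ⟨k, rfl, U, hopen, hcov, fun i => ?_⟩
  obtain ⟨s, hs⟩ := hsec i
  refine ⟨γ.comp s, ?_⟩
  have e1 : (q.comp (γ.comp s)).Homotopic ((β.comp p).comp s) := by
    rw [← ContinuousMap.comp_assoc]
    exact ContinuousMap.Homotopic.comp h2 (ContinuousMap.Homotopic.refl s)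
  have e2 : ((β.comp p).comp s).Homotopic ((β.comp φ).comp (restr (U i))) := by
    rw [ContinuousMap.comp_assoc, ContinuousMap.comp_assoc]
    exact ContinuousMap.Homotopic.comp (ContinuousMap.Homotopic.refl β) hs
  have e3 : ((β.comp φ).comp (restr (U i))).Homotopic (ψ.comp (restr (U i))) :=
    ContinuousMap.Homotopic.comp h1.symm (ContinuousMap.Homotopic.refl _)
  exact (e1.trans e2).trans e3
end
end

section
/- Let φ : K → X and p : A → X be continuous maps. Then secat_φ(p) ≤ secat(p); moreover, if φ admits a homotopy section (a continuous map s : X → K with φ ∘ s homotopic to the identity of X), then secat_φ(p) = secat(p). -/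
open ContinuousMap Set

noncomputable section

theorem stmt10 {K X A : Type*} [TopologicalSpace K] [TopologicalSpace X] [TopologicalSpace A]
    (φ : C(K, X)) (p : C(A, X)) :
    relSecat φ p ≤ secat p ∧
      ((∃ s : C(X, K), (φ.comp s).Homotopic (ContinuousMap.id X)) →
        relSecat φ p = secat p) := by
  have h1 : relSecat φ p ≤ secat p := by
    apply sInf_le_sInf
    rintro n ⟨k, rfl, U, hUo, hUc, hUs⟩
    refine ⟨k, rfl, fun i => φ ⁻¹' U i, fun i => (hUo i).preimage φ.continuous, ?_, ?_⟩
    · rw [← Set.preimage_iUnion, hUc, Set.preimage_univ]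
    · intro i
      obtain ⟨s, hs⟩ := hUs i
      let φ' : C(↥(φ ⁻¹' U i), ↥(U i)) :=
        ⟨fun x => ⟨φ x, x.2⟩, Continuous.subtype_mk (by continuity) _⟩
      refine ⟨s.comp φ', ?_⟩
      have h := ContinuousMap.Homotopic.comp hs (ContinuousMap.Homotopic.refl φ')
      have e1 : (p.comp s).comp φ' = p.comp (s.comp φ') := rfl
      have e2 : (restr (U i)).comp φ' = φ.comp (restr (φ ⁻¹' U i)) := rfl
      rwa [e1, e2] at h
  refine ⟨h1, fun ⟨s, hsec⟩ => le_antisymm h1 ?_⟩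
  apply sInf_le_sInf
  rintro n ⟨k, rfl, V, hVo, hVc, hVs⟩
  refine ⟨k, rfl, fun i => s ⁻¹' V i, fun i => (hVo i).preimage s.continuous, ?_, ?_⟩
  · rw [← Set.preimage_iUnion, hVc, Set.preimage_univ]
  · intro i
    obtain ⟨t, ht⟩ := hVs i
    let s' : C(↥(s ⁻¹' V i), ↥(V i)) :=
      ⟨fun x => ⟨s x, x.2⟩, Continuous.subtype_mk (by continuity) _⟩
    refine ⟨t.comp s', ?_⟩
    have h := ContinuousMap.Homotopic.comp ht (ContinuousMap.Homotopic.refl s')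
    have e1 : (p.comp t).comp s' = p.comp (t.comp s') := rfl
    have e2 : (φ.comp (restr (V i))).comp s' = (φ.comp s).comp (restr (s ⁻¹' V i)) := rfl
    rw [e1, e2] at h
    have h2 := ContinuousMap.Homotopic.comp hsec (ContinuousMap.Homotopic.refl (restr (s ⁻¹' V i)))
    have e3 : (ContinuousMap.id X).comp (restr (s ⁻¹' V i)) = restr (s ⁻¹' V i) := rfl
    rw [e3] at h2
    exact h.trans h2
end
end

section
/- Let φ : K → X, p : A → X, ψ : L → Y, q : B → Y be continuous maps, where K and L are normal topological spaces. Then secat_{φ×ψ}(p×q) ≤ secat_φ(p) + secat_ψ(q), where φ×ψ : K × L → X × Y and p×q : A × B → X × Y are the product maps. -/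
open ContinuousMap Set

noncomputable section

/-- A subset is `φ`-sectional for `p` if the restriction of `φ` has a lift through `p`
up to homotopy. -/
def Sectional {K X A : Type*} [TopologicalSpace K] [TopologicalSpace X] [TopologicalSpace A]
    (φ : C(K, X)) (p : C(A, X)) (U : Set K) : Prop :=
  ∃ s : C(U, A), (p.comp s).Homotopic (φ.comp (restr U))

section SectionalLemmas

variable {K X A L Y B : Type*} [TopologicalSpace K] [TopologicalSpace X]
    [TopologicalSpace A] [TopologicalSpace L] [TopologicalSpace Y] [TopologicalSpace B]

theorem Sectional.mono {φ : C(K, X)} {p : C(A, X)} {U Z : Set K}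
    (h : Sectional φ p U) (hZU : Z ⊆ U) : Sectional φ p Z := by
  obtain ⟨s, hs⟩ := h
  let ι : C(Z, U) := ⟨Set.inclusion hZU, continuous_inclusion hZU⟩
  have h2 := ContinuousMap.Homotopic.comp hs (ContinuousMap.Homotopic.refl ι)
  rw [comp_assoc, comp_assoc] at h2
  have e2 : (restr U).comp ι = restr Z := by ext z; rfl
  rw [e2] at h2
  exact ⟨s.comp ι, h2⟩

theorem Sectional.prod {φ : C(K, X)} {p : C(A, X)} {ψ : C(L, Y)} {q : C(B, Y)}
    {U : Set K} {V : Set L} (hU : Sectional φ p U) (hV : Sectional ψ q V) :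
    Sectional (φ.prodMap ψ) (p.prodMap q) (U ×ˢ V) := by
  obtain ⟨s, hs⟩ := hU
  obtain ⟨t, ht⟩ := hV
  let e : C(↥(U ×ˢ V), ↥U × ↥V) := (Homeomorph.Set.prod U V : C(↥(U ×ˢ V), ↥U × ↥V))
  have h2 := ContinuousMap.Homotopic.comp (hs.prodMap ht) (ContinuousMap.Homotopic.refl e)
  have e1 : (p.comp s).prodMap (q.comp t) = (p.prodMap q).comp (s.prodMap t) :=
    ContinuousMap.ext fun z => rfl
  have e2 : ((φ.comp (restr U)).prodMap (ψ.comp (restr V))).comp e =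
      (φ.prodMap ψ).comp (restr (U ×ˢ V)) := ContinuousMap.ext fun z => rfl
  rw [e1, comp_assoc, e2] at h2
  exact ⟨(s.prodMap t).comp e, h2⟩

/-- Gluing sections over a pairwise disjoint family of open sectional sets. -/
theorem sectional_iUnion {ι : Type*} {φ : C(K, X)} {p : C(A, X)} (W : ι → Set K)
    (ho : ∀ i, IsOpen (W i)) (hd : Pairwise (Function.onFun Disjoint W))
    (hs : ∀ i, Sectional φ p (W i)) : Sectional φ p (⋃ i, W i) := by
  choose s hsH using hs
  have H : ∀ i, ContinuousMap.Homotopy (p.comp (s i)) (φ.comp (restr (W i))) :=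
    fun i => (hsH i).some
  set Z := ⋃ i, W i with hZ
  have idx : ∀ z : Z, ∃ i, (z : K) ∈ W i := fun z => mem_iUnion.mp z.2
  let ind : Z → ι := fun z => (idx z).choose
  have memW : ∀ z : Z, (z : K) ∈ W (ind z) := fun z => (idx z).choose_spec
  have uniq : ∀ (z : Z) (i : ι), (z : K) ∈ W i → ind z = i := by
    intro z i hi
    by_contra hne
    exact Set.disjoint_left.mp (hd hne) (memW z) hi
  -- the glued section
  let F : Z → A := fun z => s (ind z) ⟨z, memW z⟩
  have keyF : ∀ (i : ι) (z : Z) (hz : (z : K) ∈ W i), F z = s i ⟨z, hz⟩ := by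
    intro i z hz
    have hind := uniq z i hz
    have : ∀ (j) (hj : (z : K) ∈ W j), j = i → s j ⟨(z : K), hj⟩ = s i ⟨(z : K), hz⟩ := by
      rintro j hj rfl; rfl
    exact this _ (memW z) hind
  have contF : Continuous F := by
    rw [continuous_iff_continuousAt]
    intro z
    have hNopen : IsOpen ((Subtype.val : Z → K) ⁻¹' W (ind z)) :=
      (ho (ind z)).preimage continuous_subtype_val
    have hCO : ContinuousOn F (Subtype.val ⁻¹' W (ind z)) := by
      rw [continuousOn_iff_continuous_restrict]
      have hre : (Subtype.val ⁻¹' W (ind z)).domRestrict F =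
          fun w => s (ind z) ⟨((w.1 : Z) : K), w.2⟩ := by
        funext w
        exact keyF (ind z) w.1 w.2
      rw [hre]
      exact (map_continuous (s (ind z))).comp
        ((continuous_subtype_val.comp continuous_subtype_val).subtype_mk _)
    exact hCO.continuousAt (hNopen.mem_nhds (memW z))
  -- the glued homotopy
  let G : unitInterval × Z → X := fun w => H (ind w.2) (w.1, ⟨(w.2 : K), memW w.2⟩)
  have keyG : ∀ (i : ι) (w : unitInterval × Z) (hz : ((w.2 : Z) : K) ∈ W i),
      G w = H i (w.1, ⟨(w.2 : K), hz⟩) := by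
    intro i w hz
    have hind := uniq w.2 i hz
    have : ∀ (j) (hj : ((w.2 : Z) : K) ∈ W j), j = i →
        H j (w.1, ⟨((w.2 : Z) : K), hj⟩) = H i (w.1, ⟨((w.2 : Z) : K), hz⟩) := by
      rintro j hj rfl; rfl
    exact this _ (memW w.2) hind
  have contG : Continuous G := by
    rw [continuous_iff_continuousAt]
    intro w
    have hNopen : IsOpen ((fun v : unitInterval × Z => (v.2 : K)) ⁻¹' W (ind w.2)) :=
      (ho (ind w.2)).preimage (continuous_subtype_val.comp continuous_snd)
    have hCO : ContinuousOn G ((fun v : unitInterval × Z => (v.2 : K)) ⁻¹' W (ind w.2)) := by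
      rw [continuousOn_iff_continuous_restrict]
      have hre : (((fun v : unitInterval × Z => (v.2 : K)) ⁻¹' W (ind w.2))).domRestrict G =
          fun v => H (ind w.2) (v.1.1, ⟨((v.1.2 : Z) : K), v.2⟩) := by
        funext v
        exact keyG (ind w.2) v.1 v.2
      rw [hre]
      refine (map_continuous (H (ind w.2))).comp ?_
      exact ((continuous_fst.comp continuous_subtype_val).prodMk
        (((continuous_subtype_val.comp continuous_snd).comp continuous_subtype_val).subtype_mk _))
    exact hCO.continuousAt (hNopen.mem_nhds (memW w.2))
  refine ⟨⟨F, contF⟩, ⟨⟨⟨G, contG⟩, ?_, ?_⟩⟩⟩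
  · intro z
    show G (0, z) = p (F z)
    have h0 := (H (ind z)).apply_zero (⟨(z : K), memW z⟩ : W (ind z))
    exact h0
  · intro z
    show G (1, z) = φ (z : K)
    have h1 := (H (ind z)).apply_one (⟨(z : K), memW z⟩ : W (ind z))
    exact h1

end SectionalLemmas

/-- Urysohn-type functions subordinate to a finite open cover of a normal space. -/
theorem exists_urysohn_family {K : Type*} [TopologicalSpace K] [NormalSpace K] {n : ℕ}
    (U : Fin n → Set K) (ho : ∀ i, IsOpen (U i)) (hc : ⋃ i, U i = Set.univ) :
    ∃ f : Fin n → C(K, ℝ), (∀ i x, 0 ≤ f i x) ∧ (∀ i x, f i x ≠ 0 → x ∈ U i) ∧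
      (∀ x, ∃ i, f i x = 1) := by
  obtain ⟨v, hvU, hvo, hvc⟩ := exists_iUnion_eq_closure_subset ho
    (fun x => Set.toFinite _) hc
  have hch : ∀ i : Fin n, ∃ f : C(K, ℝ), EqOn f 0 (U i)ᶜ ∧ EqOn f 1 (closure (v i)) ∧
      ∀ x, f x ∈ Icc (0 : ℝ) 1 := by
    intro i
    exact exists_continuous_zero_one_of_isClosed (ho i).isClosed_compl isClosed_closure
      (by rw [disjoint_compl_left_iff]; exact hvc i)
  choose f hf0 hf1 hf01 using hch
  refine ⟨f, fun i x => (hf01 i x).1, ?_, ?_⟩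
  · intro i x hx
    by_contra hxU
    exact hx (hf0 i hxU)
  · intro x
    have : x ∈ ⋃ i, v i := hvU ▸ mem_univ x
    obtain ⟨i, hi⟩ := mem_iUnion.mp this
    exact ⟨i, hf1 i (subset_closure hi)⟩

/-- The key construction: a product cover of size `n + m + 1` from sectional covers of the
factors. -/
theorem key_cover {K X A L Y B : Type*} [TopologicalSpace K] [TopologicalSpace X]
    [TopologicalSpace A] [TopologicalSpace L] [TopologicalSpace Y] [TopologicalSpace B]
    [NormalSpace K] [NormalSpace L]
    (φ : C(K, X)) (p : C(A, X)) (ψ : C(L, Y)) (q : C(B, Y)) {n m : ℕ}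
    (U : Fin (n + 1) → Set K) (hUo : ∀ i, IsOpen (U i)) (hUc : ⋃ i, U i = Set.univ)
    (hUs : ∀ i, Sectional φ p (U i))
    (V : Fin (m + 1) → Set L) (hVo : ∀ j, IsOpen (V j)) (hVc : ⋃ j, V j = Set.univ)
    (hVs : ∀ j, Sectional ψ q (V j)) :
    ∃ Ω : Fin (n + m + 1) → Set (K × L), (∀ k, IsOpen (Ω k)) ∧ (⋃ k, Ω k) = Set.univ ∧
      ∀ k, Sectional (φ.prodMap ψ) (p.prodMap q) (Ω k) := by
  obtain ⟨f, hf0, hfU, hf1⟩ := exists_urysohn_family U hUo hUc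
  obtain ⟨g, hg0, hgV, hg1⟩ := exists_urysohn_family V hVo hVc
  -- the basic sets W S T
  set W : Finset (Fin (n + 1)) → Finset (Fin (m + 1)) → Set (K × L) := fun S T =>
    (⋂ i ∈ S, {z : K × L | 0 < f i z.1}) ∩ (⋂ j ∈ T, {z : K × L | 0 < g j z.2}) ∩
      ⋂ i ∈ S, ⋂ j ∈ T,
        ⋂ P : {ij : Fin (n + 1) × Fin (m + 1) // ij.1 ∉ S ∨ ij.2 ∉ T},
          {z : K × L | f P.1.1 z.1 * g P.1.2 z.2 < f i z.1 * g j z.2} with hWdef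
  have hWmem : ∀ S T (z : K × L), z ∈ W S T ↔
      ((∀ i ∈ S, 0 < f i z.1) ∧ (∀ j ∈ T, 0 < g j z.2) ∧
        ∀ i ∈ S, ∀ j ∈ T, ∀ i' j', (i' ∉ S ∨ j' ∉ T) →
          f i' z.1 * g j' z.2 < f i z.1 * g j z.2) := by
    intro S T z
    simp only [hWdef, mem_inter_iff, mem_iInter, mem_setOf_eq, Subtype.forall, Prod.forall,
      and_assoc]
  have hWopen : ∀ S T, IsOpen (W S T) := by
    intro S T
    refine ((isOpen_biInter_finset fun i _ => ?_).inter
      (isOpen_biInter_finset fun j _ => ?_)).inter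
      (isOpen_biInter_finset fun i _ => isOpen_biInter_finset fun j _ =>
        isOpen_iInter_of_finite fun P => ?_)
    · exact isOpen_lt continuous_const ((f i).continuous.comp continuous_fst)
    · exact isOpen_lt continuous_const ((g j).continuous.comp continuous_snd)
    · exact isOpen_lt
        (((f P.1.1).continuous.comp continuous_fst).mul ((g P.1.2).continuous.comp continuous_snd))
        (((f i).continuous.comp continuous_fst).mul ((g j).continuous.comp continuous_snd))
  -- coverage
  have hcov : ∀ z : K × L, ∃ S T, S.Nonempty ∧ T.Nonempty ∧ z ∈ W S T := by
    intro z
    obtain ⟨i₀, hi₀⟩ := Finite.exists_max fun i => f i z.1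
    obtain ⟨j₀, hj₀⟩ := Finite.exists_max fun j => g j z.2
    set Mx := f i₀ z.1 with hMx
    set My := g j₀ z.2 with hMy
    have hMx0 : 0 < Mx := by
      obtain ⟨i1, hi1⟩ := hf1 z.1
      have := hi₀ i1
      rw [hi1] at this
      linarith
    have hMy0 : 0 < My := by
      obtain ⟨j1, hj1⟩ := hg1 z.2
      have := hj₀ j1
      rw [hj1] at this
      linarith
    refine ⟨Finset.univ.filter fun i => f i z.1 = Mx,
      Finset.univ.filter fun j => g j z.2 = My, ⟨i₀, by simp [hMx]⟩, ⟨j₀, by simp [hMy]⟩, ?_⟩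
    rw [hWmem]
    refine ⟨?_, ?_, ?_⟩
    · intro i hi
      rw [Finset.mem_filter] at hi
      rw [hi.2]; exact hMx0
    · intro j hj
      rw [Finset.mem_filter] at hj
      rw [hj.2]; exact hMy0
    · intro i hi j hj i' j' hout
      rw [Finset.mem_filter] at hi hj
      rw [hi.2, hj.2]
      rcases hout with hout | hout
      · have hlt : f i' z.1 < Mx := lt_of_le_of_ne (hi₀ i') (by simpa using hout)
        calc f i' z.1 * g j' z.2 ≤ f i' z.1 * My :=
              mul_le_mul_of_nonneg_left (hj₀ j') (hf0 i' z.1)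
          _ < Mx * My := mul_lt_mul_of_pos_right hlt hMy0
      · have hlt : g j' z.2 < My := lt_of_le_of_ne (hj₀ j') (by simpa using hout)
        calc f i' z.1 * g j' z.2 ≤ Mx * g j' z.2 :=
              mul_le_mul_of_nonneg_right (hi₀ i') (hg0 j' z.2)
          _ < Mx * My := mul_lt_mul_of_pos_left hlt hMx0
  -- disjointness
  have hdisj : ∀ S T S' T', S.Nonempty → T.Nonempty → S'.Nonempty → T'.Nonempty →
      S.card + T.card = S'.card + T'.card → ¬(S = S' ∧ T = T') →
      Disjoint (W S T) (W S' T') := by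
    intro S T S' T' hS hT hS' hT' hcard hne
    rw [Set.disjoint_left]
    intro z hz hz'
    rw [hWmem] at hz hz'
    obtain ⟨h1, h2, h3⟩ := hz
    obtain ⟨h1', h2', h3'⟩ := hz'
    by_cases hss : S ⊆ S' ∧ T ⊆ T'
    · have hc1 : S.card ≤ S'.card := Finset.card_le_card hss.1
      have hc2 : T.card ≤ T'.card := Finset.card_le_card hss.2
      exact hne ⟨Finset.eq_of_subset_of_card_le hss.1 (by omega),
        Finset.eq_of_subset_of_card_le hss.2 (by omega)⟩
    by_cases hss' : S' ⊆ S ∧ T' ⊆ T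
    · have hc1 : S'.card ≤ S.card := Finset.card_le_card hss'.1
      have hc2 : T'.card ≤ T.card := Finset.card_le_card hss'.2
      exact hne ⟨(Finset.eq_of_subset_of_card_le hss'.1 (by omega)).symm,
        (Finset.eq_of_subset_of_card_le hss'.2 (by omega)).symm⟩
    have hex1 : ∃ i j, i ∈ S ∧ j ∈ T ∧ (i ∉ S' ∨ j ∉ T') := by
      rcases not_and_or.mp hss with h | h
      · obtain ⟨i, hiS, hiS'⟩ := Finset.not_subset.mp h
        obtain ⟨j, hj⟩ := hT
        exact ⟨i, j, hiS, hj, Or.inl hiS'⟩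
      · obtain ⟨j, hjT, hjT'⟩ := Finset.not_subset.mp h
        obtain ⟨i, hi⟩ := hS
        exact ⟨i, j, hi, hjT, Or.inr hjT'⟩
    have hex2 : ∃ i j, i ∈ S' ∧ j ∈ T' ∧ (i ∉ S ∨ j ∉ T) := by
      rcases not_and_or.mp hss' with h | h
      · obtain ⟨i, hiS, hiS'⟩ := Finset.not_subset.mp h
        obtain ⟨j, hj⟩ := hT'
        exact ⟨i, j, hiS, hj, Or.inl hiS'⟩
      · obtain ⟨j, hjT, hjT'⟩ := Finset.not_subset.mp h
        obtain ⟨i, hi⟩ := hS'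
        exact ⟨i, j, hi, hjT, Or.inr hjT'⟩
    obtain ⟨i, j, hiS, hjT, hout1⟩ := hex1
    obtain ⟨i', j', hiS', hjT', hout2⟩ := hex2
    have c1 := h3 i hiS j hjT i' j' hout2
    have c2 := h3' i' hiS' j' hjT' i j hout1
    linarith
  -- sectionality
  have hWsec : ∀ S T, S.Nonempty → T.Nonempty →
      Sectional (φ.prodMap ψ) (p.prodMap q) (W S T) := by
    rintro S T ⟨i, hi⟩ ⟨j, hj⟩
    refine ((hUs i).prod (hVs j)).mono ?_
    intro z hz
    rw [hWmem] at hz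
    exact ⟨hfU i z.1 (hz.1 i hi).ne', hgV j z.2 (hz.2.1 j hj).ne'⟩
  -- assembling
  refine ⟨fun k => ⋃ P : {ST : Finset (Fin (n + 1)) × Finset (Fin (m + 1)) //
      ST.1.Nonempty ∧ ST.2.Nonempty ∧ ST.1.card + ST.2.card = (k : ℕ) + 2},
      W P.1.1 P.1.2, ?_, ?_, ?_⟩
  · intro k
    exact isOpen_iUnion fun P => hWopen _ _
  · rw [eq_univ_iff_forall]
    intro z
    obtain ⟨S, T, hS, hT, hzW⟩ := hcov z
    have hcard1 : 1 ≤ S.card := Finset.Nonempty.card_pos hS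
    have hcard2 : 1 ≤ T.card := Finset.Nonempty.card_pos hT
    have hcard3 : S.card ≤ n + 1 := le_of_le_of_eq (Finset.card_le_univ S) (by simp)
    have hcard4 : T.card ≤ m + 1 := le_of_le_of_eq (Finset.card_le_univ T) (by simp)
    refine mem_iUnion.mpr ⟨⟨S.card + T.card - 2, by omega⟩, ?_⟩
    exact mem_iUnion.mpr ⟨⟨(S, T), hS, hT, by simp; omega⟩, hzW⟩
  · intro k
    refine sectional_iUnion _ (fun P => hWopen _ _) ?_ (fun P => hWsec _ _ P.2.1 P.2.2.1)
    intro P P' hne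
    refine hdisj _ _ _ _ P.2.1 P.2.2.1 P'.2.1 P'.2.2.1 (by rw [P.2.2.2, P'.2.2.2]) ?_
    rintro ⟨hS, hT⟩
    exact hne (Subtype.ext (Prod.ext hS hT))

theorem stmt12 {K X A L Y B : Type*} [TopologicalSpace K] [TopologicalSpace X]
    [TopologicalSpace A] [TopologicalSpace L] [TopologicalSpace Y] [TopologicalSpace B]
    [NormalSpace K] [NormalSpace L]
    (φ : C(K, X)) (p : C(A, X)) (ψ : C(L, Y)) (q : C(B, Y)) :
    relSecat (φ.prodMap ψ) (p.prodMap q) ≤ relSecat φ p + relSecat ψ q := by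
  set S1 := {n : ℕ∞ | ∃ k : ℕ, n = (k : ℕ∞) ∧ ∃ U : Fin (k + 1) → Set K,
    (∀ i, IsOpen (U i)) ∧ (⋃ i, U i) = Set.univ ∧
    ∀ i, ∃ s : C(U i, A), (p.comp s).Homotopic (φ.comp (restr (U i)))} with hS1
  set S2 := {n : ℕ∞ | ∃ k : ℕ, n = (k : ℕ∞) ∧ ∃ V : Fin (k + 1) → Set L,
    (∀ j, IsOpen (V j)) ∧ (⋃ j, V j) = Set.univ ∧
    ∀ j, ∃ s : C(V j, B), (q.comp s).Homotopic (ψ.comp (restr (V j)))} with hS2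
  by_cases hne1 : S1.Nonempty
  swap
  · have : S1 = ∅ := not_nonempty_iff_eq_empty.mp hne1
    have h1 : relSecat φ p = ⊤ := by rw [relSecat, ← hS1, this, sInf_empty]
    rw [h1, top_add]
    exact le_top
  by_cases hne2 : S2.Nonempty
  swap
  · have : S2 = ∅ := not_nonempty_iff_eq_empty.mp hne2
    have h2 : relSecat ψ q = ⊤ := by rw [relSecat, ← hS2, this, sInf_empty]
    rw [h2, add_top]
    exact le_top
  have hm1 : relSecat φ p ∈ S1 := csInf_mem hne1
  have hm2 : relSecat ψ q ∈ S2 := csInf_mem hne2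
  obtain ⟨n, hn, U, hUo, hUc, hUs⟩ := hm1
  obtain ⟨m, hm, V, hVo, hVc, hVs⟩ := hm2
  obtain ⟨Ω, hΩo, hΩc, hΩs⟩ := key_cover φ p ψ q U hUo hUc hUs V hVo hVc hVs
  rw [hn, hm, ← Nat.cast_add]
  refine sInf_le ?_
  exact ⟨n + m, rfl, Ω, hΩo, hΩc, fun k => hΩs k⟩

end
end

section
/- Let f : X → Y and f' : X' → Y' be continuous maps, and let α : X → X' and β : Y → Y' be homotopy equivalences such that f' ∘ α is homotopic to β ∘ f. Then secat_g(f) = secat_g(f'). -/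
open ContinuousMap Set

noncomputable section

/-- The generalized sectional category of `p : E → B`: the least `n` such that `B` admits a
cover by `n+1` arbitrary (not necessarily open) subsets, each admitting a continuous local
homotopy section. -/
def gsecat {E B : Type*} [TopologicalSpace E] [TopologicalSpace B] (p : C(E, B)) : ℕ∞ :=
  sInf {n : ℕ∞ | ∃ k : ℕ, n = (k : ℕ∞) ∧ ∃ U : Fin (k + 1) → Set B,
    (⋃ i, U i) = Set.univ ∧
    ∀ i, ∃ s : C(U i, E), (p.comp s).Homotopic (restr (U i))}

lemma gsecat_key {X Y X' Y' : Type*} [TopologicalSpace X] [TopologicalSpace Y]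
    [TopologicalSpace X'] [TopologicalSpace Y']
    (f : C(X, Y)) (f' : C(X', Y')) (α : C(X, X')) (β : C(Y, Y')) (β' : C(Y', Y))
    (hββ' : (β.comp β').Homotopic (ContinuousMap.id Y'))
    (hcomm : (f'.comp α).Homotopic (β.comp f)) :
    gsecat f' ≤ gsecat f := by
  apply sInf_le_sInf
  rintro n ⟨k, rfl, U, hcov, hsec⟩
  refine ⟨k, rfl, fun i => β' ⁻¹' (U i), ?_, ?_⟩
  · have : (⋃ i, β' ⁻¹' U i) = β' ⁻¹' (⋃ i, U i) := by
      rw [Set.preimage_iUnion]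
    rw [this, hcov, Set.preimage_univ]
  · intro i
    obtain ⟨s, hs⟩ := hsec i
    let ρ : C((β' ⁻¹' (U i) : Set Y'), (U i : Set Y)) :=
      ⟨fun v => ⟨β' v, v.2⟩, by continuity⟩
    refine ⟨α.comp (s.comp ρ), ?_⟩
    have h1 : (f'.comp (α.comp (s.comp ρ))).Homotopic
        ((β.comp f).comp (s.comp ρ)) := by
      rw [← ContinuousMap.comp_assoc]
      exact ContinuousMap.Homotopic.comp hcomm (ContinuousMap.Homotopic.refl _)
    have h2 : ((β.comp f).comp (s.comp ρ)).Homotopic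
        (β.comp ((restr (U i)).comp ρ)) := by
      rw [ContinuousMap.comp_assoc, ← ContinuousMap.comp_assoc f]
      exact ContinuousMap.Homotopic.comp (ContinuousMap.Homotopic.refl β)
        (ContinuousMap.Homotopic.comp hs (ContinuousMap.Homotopic.refl ρ))
    have heq : β.comp ((restr (U i)).comp ρ) =
        (β.comp β').comp (restr (β' ⁻¹' (U i))) := by
      ext v; rfl
    have h3 : ((β.comp β').comp (restr (β' ⁻¹' (U i)))).Homotopic
        (restr (β' ⁻¹' (U i))) := by
      have := ContinuousMap.Homotopic.comp hββ' (ContinuousMap.Homotopic.refl (restr (β' ⁻¹' (U i))))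
      simpa using this
    exact h1.trans (h2.trans (heq ▸ h3))

theorem stmt13 {X Y X' Y' : Type*} [TopologicalSpace X] [TopologicalSpace Y]
    [TopologicalSpace X'] [TopologicalSpace Y']
    (f : C(X, Y)) (f' : C(X', Y')) (α : C(X, X')) (β : C(Y, Y'))
    (hα : IsHtpyEquiv α) (hβ : IsHtpyEquiv β)
    (hcomm : (f'.comp α).Homotopic (β.comp f)) :
    gsecat f = gsecat f' := by
  obtain ⟨α', hαl, hαr⟩ := hα
  obtain ⟨β', hβl, hβr⟩ := hβ
  have hcomm' : (f.comp α').Homotopic (β'.comp f') := by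
    have h1 : (β'.comp f').Homotopic ((β'.comp f').comp (α.comp α')) := by
      have := ContinuousMap.Homotopic.comp (ContinuousMap.Homotopic.refl (β'.comp f')) (hαr.symm)
      simpa using this
    have h2 : ((β'.comp f').comp (α.comp α')).Homotopic
        ((β'.comp (β.comp f)).comp α') := by
      have : ((β'.comp f').comp (α.comp α')) = ((β'.comp (f'.comp α)).comp α') := by
        ext x; rfl
      rw [this]
      exact ContinuousMap.Homotopic.comp
        (ContinuousMap.Homotopic.comp (ContinuousMap.Homotopic.refl β') (hcomm)) (ContinuousMap.Homotopic.refl α')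
    have h3 : ((β'.comp (β.comp f)).comp α').Homotopic (f.comp α') := by
      have : ((β'.comp (β.comp f)).comp α') = ((β'.comp β).comp (f.comp α')) := by
        ext x; rfl
      rw [this]
      have := ContinuousMap.Homotopic.comp hβl (ContinuousMap.Homotopic.refl (f.comp α'))
      simpa using this
    exact (h1.trans (h2.trans h3)).symm
  exact le_antisymm
    (gsecat_key f' f α' β' β hβl hcomm')
    (gsecat_key f f' α β β' hβr hcomm)
end
end

section
/- Let X be a metrizable space, Z an ANR space, f, g : X → Z continuous maps, A ⊆ X a closed subspace, and H : A × I → Z a homotopy from f|A to g|A. Then there exist an open subset U of X with A ⊆ U and a homotopy H̃ : U × I → Z from f|U to g|U such that H̃ restricted to A × I equals H. -/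
open ContinuousMap Set

noncomputable section

universe u v

/-- A topological space `Z` is an ANR: it is metrizable and for every metrizable space `M`,
every closed subset `A ⊆ M` and every continuous map `A → Z`, the map extends continuously
over some open set `U` with `A ⊆ U ⊆ M`. -/
def IsANR (Z : Type u) [TopologicalSpace Z] : Prop :=
  TopologicalSpace.MetrizableSpace Z ∧
    ∀ (M : Type u) [TopologicalSpace M] [TopologicalSpace.MetrizableSpace M]
      (A : Set M), IsClosed A → ∀ f : C(A, Z),
        ∃ (U : Set M) (hAU : A ⊆ U), IsOpen U ∧
          ∃ F : C(U, Z), ∀ (a : M) (ha : a ∈ A), F ⟨a, hAU ha⟩ = f ⟨a, ha⟩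

/-- Pasting lemma: a function continuous on two closed sets is continuous on their union. -/
lemma continuousOn_union_of_isClosed' {α β : Type*} [TopologicalSpace α] [TopologicalSpace β]
    {s t : Set α} {f : α → β} (hs : IsClosed s) (ht : IsClosed t)
    (hfs : ContinuousOn f s) (hft : ContinuousOn f t) : ContinuousOn f (s ∪ t) := by
  intro x hx
  have hxs : ContinuousWithinAt f s x := by
    by_cases h : x ∈ s
    · exact hfs x h
    · exact continuousWithinAt_of_notMem_closure (by rwa [hs.closure_eq])
  have hxt : ContinuousWithinAt f t x := by
    by_cases h : x ∈ t
    · exact hft x h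
    · exact continuousWithinAt_of_notMem_closure (by rwa [ht.closure_eq])
  exact hxs.union hxt

theorem stmt15 {X Z : Type u} [TopologicalSpace X] [TopologicalSpace Z]
    [TopologicalSpace.MetrizableSpace X] (hZ : IsANR Z)
    (f g : C(X, Z)) (A : Set X) (hA : IsClosed A)
    (H : C(A × unitInterval, Z))
    (hH0 : ∀ a : A, H (a, 0) = f a) (hH1 : ∀ a : A, H (a, 1) = g a) :
    ∃ (U : Set X) (hAU : A ⊆ U), IsOpen U ∧
      ∃ H' : C(U × unitInterval, Z),
        (∀ u : U, H' (u, 0) = f u) ∧ (∀ u : U, H' (u, 1) = g u) ∧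
        ∀ (a : X) (ha : a ∈ A) (t : unitInterval), H' (⟨a, hAU ha⟩, t) = H (⟨a, ha⟩, t) := by
  classical
  -- the closed set B = (A × I) ∪ (X × {0,1}) in X × I
  set B : Set (X × unitInterval) :=
    (A ×ˢ (univ : Set unitInterval)) ∪ ((univ : Set X) ×ˢ ({0, 1} : Set unitInterval)) with hB
  have hB1 : IsClosed (A ×ˢ (univ : Set unitInterval)) := hA.prod isClosed_univ
  have hB2 : IsClosed ((univ : Set X) ×ˢ ({0, 1} : Set unitInterval)) :=
    isClosed_univ.prod (Set.Finite.isClosed (by simp))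
  have hBclosed : IsClosed B := hB1.union hB2
  -- the glued function on B
  set hfun : X × unitInterval → Z := fun p =>
    if hp : p.1 ∈ A then H (⟨p.1, hp⟩, p.2) else if (p.2 : ℝ) ≤ 1/2 then f p.1 else g p.1
    with hfun_def
  have hfunA : ∀ (p : X × unitInterval) (hp : p.1 ∈ A), hfun p = H (⟨p.1, hp⟩, p.2) := by
    intro p hp; simp [hfun_def, hp]
  have hfun0 : ∀ x : X, hfun (x, 0) = f x := by
    intro x
    by_cases hx : x ∈ A
    · rw [hfunA _ hx]; exact hH0 ⟨x, hx⟩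
    · simp [hfun_def, hx]
  have hfun1 : ∀ x : X, hfun (x, 1) = g x := by
    intro x
    by_cases hx : x ∈ A
    · rw [hfunA _ hx]; exact hH1 ⟨x, hx⟩
    · simp [hfun_def, hx]; norm_num
  -- continuity of hfun on B
  have hcont1 : ContinuousOn hfun (A ×ˢ (univ : Set unitInterval)) := by
    rw [continuousOn_iff_continuous_restrict]
    have : (A ×ˢ (univ : Set unitInterval)).restrict hfun =
        H ∘ (fun q : ↥(A ×ˢ (univ : Set unitInterval)) =>
          ((⟨q.1.1, q.2.1⟩ : A), q.1.2)) := by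
      funext q
      exact hfunA q.1 q.2.1
    change Continuous ((A ×ˢ (univ : Set unitInterval)).restrict hfun)
    rw [this]
    exact H.continuous.comp (by fun_prop)
  have hcont2 : ContinuousOn hfun ((univ : Set X) ×ˢ ({0, 1} : Set unitInterval)) := by
    have h01 : ((univ : Set X) ×ˢ ({0, 1} : Set unitInterval)) =
        ((univ : Set X) ×ˢ ({0} : Set unitInterval)) ∪
        ((univ : Set X) ×ˢ ({1} : Set unitInterval)) := by
      rw [← Set.prod_union]; simp [Set.pair_comm]
    rw [h01]
    apply continuousOn_union_of_isClosed'
      (isClosed_univ.prod isClosed_singleton) (isClosed_univ.prod isClosed_singleton)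
    · apply ContinuousOn.congr (f := fun p : X × unitInterval => f p.1) (by fun_prop)
      rintro ⟨x, t⟩ ⟨-, ht⟩
      simp only [mem_singleton_iff] at ht
      subst ht
      exact (hfun0 x)
    · apply ContinuousOn.congr (f := fun p : X × unitInterval => g p.1) (by fun_prop)
      rintro ⟨x, t⟩ ⟨-, ht⟩
      simp only [mem_singleton_iff] at ht
      subst ht
      exact (hfun1 x)
  have hcontB : ContinuousOn hfun B := continuousOn_union_of_isClosed' hB1 hB2 hcont1 hcont2
  -- apply the ANR property
  obtain ⟨V, hBV, hVopen, F, hF⟩ := hZ.2 (X × unitInterval) B hBclosed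
    ⟨B.restrict hfun, continuousOn_iff_continuous_restrict.mp hcontB⟩
  -- the open set U by the tube lemma
  set U : Set X := {x : X | ∀ t : unitInterval, (x, t) ∈ V} with hU_def
  have hUopen : IsOpen U := by
    rw [isOpen_iff_forall_mem_open]
    intro x hx
    obtain ⟨u, v, hu, _, hxu, hIv, huv⟩ := generalized_tube_lemma isCompact_singleton
      isCompact_univ hVopen (n := V) (by
        rintro ⟨a, t⟩ ⟨ha, -⟩
        simp only [mem_singleton_iff] at ha
        subst ha
        exact hx t)
    exact ⟨u, fun y hy t => huv ⟨hy, hIv (mem_univ t)⟩, hu, hxu rfl⟩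
  have hAU : A ⊆ U := fun a ha t => hBV (Or.inl ⟨ha, mem_univ t⟩)
  refine ⟨U, hAU, hUopen, ?_⟩
  have hmem : ∀ p : U × unitInterval, ((p.1 : X), p.2) ∈ V := fun p => p.1.2 p.2
  refine ⟨⟨fun p => F ⟨((p.1 : X), p.2), hmem p⟩, ?_⟩, ?_, ?_, ?_⟩
  · exact F.continuous.comp (by fun_prop)
  · intro u
    have h0 : ((u : X), (0 : unitInterval)) ∈ B := Or.inr ⟨mem_univ _, Or.inl rfl⟩
    have := hF ((u : X), (0 : unitInterval)) h0
    simp only [ContinuousMap.coe_mk] at this ⊢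
    rw [this]
    exact hfun0 u
  · intro u
    have h1 : ((u : X), (1 : unitInterval)) ∈ B := Or.inr ⟨mem_univ _, Or.inr rfl⟩
    have := hF ((u : X), (1 : unitInterval)) h1
    simp only [ContinuousMap.coe_mk] at this ⊢
    rw [this]
    exact hfun1 u
  · intro a ha t
    have hab : ((a : X), t) ∈ B := Or.inl ⟨ha, mem_univ t⟩
    have := hF ((a : X), t) hab
    simp only [ContinuousMap.coe_mk] at this ⊢
    rw [this]
    exact hfunA (a, t) ha
end
end

section
/- Let f : X → Z and g : Y → Z be continuous maps, where X, Y, and Z are ANR spaces. Then the standard homotopy pullback E_{f,g} = {(x,y,α) ∈ X × Y × Z^I : α(0) = f(x), α(1) = g(y)} is also an ANR space. -/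
open ContinuousMap Set Filter Topology

noncomputable section

universe u v

theorem isANR_of_retract {P : Type u} [TopologicalSpace P] (hP : IsANR P)
    (C : Set P) (O : Set P) (hO : IsOpen O) (hCO : C ⊆ O)
    (r : C(O, C)) (hr : ∀ (p : P) (hp : p ∈ C), r ⟨p, hCO hp⟩ = ⟨p, hp⟩) :
    IsANR C := by
  obtain ⟨hPm, hPe⟩ := hP
  haveI := hPm
  refine ⟨inferInstance, ?_⟩
  intro M _ _ A hA f
  obtain ⟨U, hAU, hUopen, F, hF⟩ := hPe M A hA ⟨fun a => (f a : P), by fun_prop⟩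
  set U' : Set M := {m | ∃ h : m ∈ U, F ⟨m, h⟩ ∈ O} with hU'def
  have hAU' : A ⊆ U' := by
    intro a ha
    refine ⟨hAU ha, ?_⟩
    rw [hF a ha]
    exact hCO (f ⟨a, ha⟩).2
  have hU'img : U' = Subtype.val '' (F ⁻¹' O) := by
    ext m
    constructor
    · rintro ⟨h, hFo⟩; exact ⟨⟨m, h⟩, hFo, rfl⟩
    · rintro ⟨⟨m', h⟩, hFo, rfl⟩; exact ⟨h, hFo⟩
  have hU'open : IsOpen U' := by
    rw [hU'img]
    exact hUopen.isOpenMap_subtype_val _ (hO.preimage F.continuous)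
  refine ⟨U', hAU', hU'open, ?_⟩
  have hj : ∀ m : U', (m : M) ∈ U := fun m => m.2.choose
  have hjF : ∀ m : U', F ⟨m, hj m⟩ ∈ O := fun m => m.2.choose_spec
  refine ⟨⟨fun m => r ⟨F ⟨m, hj m⟩, hjF m⟩, ?_⟩, ?_⟩
  · exact r.continuous.comp ((F.continuous.comp (by fun_prop)).subtype_mk _)
  · intro a ha
    have h1 : F ⟨a, hj ⟨a, hAU' ha⟩⟩ = (f ⟨a, ha⟩ : P) := hF a ha
    have h2 : (⟨F ⟨a, hj ⟨a, hAU' ha⟩⟩, hjF ⟨a, hAU' ha⟩⟩ : O) =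
        ⟨(f ⟨a, ha⟩ : P), hCO (f ⟨a, ha⟩).2⟩ := Subtype.ext h1
    show r ⟨F ⟨a, hj ⟨a, hAU' ha⟩⟩, hjF ⟨a, hAU' ha⟩⟩ = f ⟨a, ha⟩
    rw [h2, hr _ (f ⟨a, ha⟩).2]

theorem isANR_prod {X Y : Type u} [TopologicalSpace X] [TopologicalSpace Y]
    (hX : IsANR X) (hY : IsANR Y) : IsANR (X × Y) := by
  obtain ⟨hXm, hXe⟩ := hX
  obtain ⟨hYm, hYe⟩ := hY
  haveI := hXm; haveI := hYm
  refine ⟨inferInstance, ?_⟩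
  intro M _ _ A hA f
  obtain ⟨U₁, hAU₁, hU₁, F₁, hF₁⟩ := hXe M A hA ⟨fun a => (f a).1, by fun_prop⟩
  obtain ⟨U₂, hAU₂, hU₂, F₂, hF₂⟩ := hYe M A hA ⟨fun a => (f a).2, by fun_prop⟩
  refine ⟨U₁ ∩ U₂, subset_inter hAU₁ hAU₂, hU₁.inter hU₂, 
    ⟨fun m => (F₁ ⟨m, m.2.1⟩, F₂ ⟨m, m.2.2⟩), by fun_prop⟩, ?_⟩
  intro a ha
  simp only [Prod.ext_iff]
  exact ⟨hF₁ a ha, hF₂ a ha⟩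

/-- openness of the "tube" set -/
theorem isOpen_tube {M : Type*} [TopologicalSpace M] {U' : Set (M × unitInterval)}
    (h : IsOpen U') : IsOpen {m : M | ∀ t, (m, t) ∈ U'} := by
  rw [isOpen_iff_forall_mem_open]
  intro m hm
  have hsub : ({m} ×ˢ (univ : Set unitInterval)) ⊆ U' := by
    rintro ⟨a, t⟩ ⟨rfl, -⟩; exact hm t
  obtain ⟨u, v, hu, _, hmu, hIv, huv⟩ := generalized_tube_lemma isCompact_singleton
    isCompact_univ h hsub
  exact ⟨u, fun m' hm' t => huv ⟨hm', hIv (mem_univ t)⟩, hu, hmu rfl⟩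

theorem isANR_pathSpace {Z : Type u} [TopologicalSpace Z] (hZ : IsANR Z) :
    IsANR C(unitInterval, Z) := by
  obtain ⟨hZm, hZe⟩ := hZ
  haveI := hZm
  letI : MetricSpace Z := TopologicalSpace.metrizableSpaceMetric Z
  refine ⟨inferInstance, ?_⟩
  intro M _ _ A hA f
  set A' : Set (M × unitInterval) := {p | p.1 ∈ A} with hA'def
  have hA'closed : IsClosed A' := hA.preimage continuous_fst
  have hc : Continuous fun p : A' => f ⟨p.1.1, p.2⟩ p.1.2 := by
    have h1 : Continuous fun p : A' => ((f ⟨p.1.1, p.2⟩ : C(unitInterval, Z)), p.1.2) := by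
      refine Continuous.prodMk (f.continuous.comp ?_) (by fun_prop)
      exact Continuous.subtype_mk (by fun_prop) _
    exact ContinuousEval.continuous_eval.comp h1
  obtain ⟨U', hAU', hU'open, F', hF'⟩ := hZe (M × unitInterval) A' hA'closed ⟨_, hc⟩
  set U : Set M := {m | ∀ t, (m, t) ∈ U'} with hUdef
  have hAU : A ⊆ U := fun a ha t => hAU' (show (a, t) ∈ A' from ha)
  have hG : Continuous fun p : ↥U × unitInterval => F' ⟨(p.1.1, p.2), p.1.2 p.2⟩ :=
    F'.continuous.comp (Continuous.subtype_mk (by fun_prop) _)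
  refine ⟨U, hAU, isOpen_tube hU'open, ContinuousMap.curry ⟨_, hG⟩, ?_⟩
  intro a ha
  ext t
  exact hF' (a, t) ha
open scoped Classical in
theorem exists_ulc {Z : Type u} [TopologicalSpace Z] (hZ : IsANR Z) :
    ∃ (W : Set (Z × Z)) (Lam : C(W, C(unitInterval, Z))),
      IsOpen W ∧ (∀ z : Z, (z, z) ∈ W) ∧
      (∀ w : W, Lam w 0 = (w : Z × Z).1) ∧
      (∀ w : W, Lam w 1 = (w : Z × Z).2) ∧
      (∀ (z : Z) (hz : (z, z) ∈ W) (t : unitInterval), Lam ⟨(z, z), hz⟩ t = z) := by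
  obtain ⟨hZm, hZe⟩ := hZ
  haveI := hZm
  letI : MetricSpace Z := TopologicalSpace.metrizableSpaceMetric Z
  set A : Set ((Z × Z) × unitInterval) :=
    {p | p.2 = 0 ∨ p.2 = 1 ∨ p.1.1 = p.1.2} with hAdef
  have hAclosed : IsClosed A := by
    refine IsClosed.union (isClosed_eq (by fun_prop) continuous_const) ?_
    exact IsClosed.union (isClosed_eq (by fun_prop) continuous_const)
      (isClosed_eq (by fun_prop) (by fun_prop))
  -- the function on A
  set f₀ : A → Z := fun p => if (p : (Z × Z) × unitInterval).2 = 1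
    then (p : (Z × Z) × unitInterval).1.2 else (p : (Z × Z) × unitInterval).1.1 with hf₀def
  have hfront : ∀ a ∈ frontier {p : A | (p : (Z × Z) × unitInterval).2 = 1},
      (a : (Z × Z) × unitInterval).1.1 = (a : (Z × Z) × unitInterval).1.2 := by
    intro a ha
    by_contra hne
    set S := {p : A | (p : (Z × Z) × unitInterval).2 = 1}
    have hScl : IsClosed S := isClosed_eq (by fun_prop) continuous_const
    have ha1 : (a : (Z × Z) × unitInterval).2 = 1 := (hScl.frontier_subset ha : a ∈ S)
    -- a is in the interior of S, contradiction
    have : a ∈ interior S := by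
      rw [mem_interior]
      refine ⟨{p : A | 0 < dist (p : (Z × Z) × unitInterval).1.1
          (p : (Z × Z) × unitInterval).1.2 ∧ (1/2 : ℝ) < (p : (Z × Z) × unitInterval).2}, ?_, ?_, ?_⟩
      · rintro p ⟨hd, ht⟩
        rcases p.2 with h0 | h1 | hdiag
        · exfalso; rw [h0] at ht; norm_num at ht
        · exact h1
        · exfalso; rw [hdiag] at hd; simp at hd
      · have hc1 : Continuous fun p : A => dist (p : (Z × Z) × unitInterval).1.1
            (p : (Z × Z) × unitInterval).1.2 := by fun_prop
        have hc2 : Continuous fun p : A => ((p : (Z × Z) × unitInterval).2 : ℝ) := by fun_prop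
        exact IsOpen.inter (isOpen_lt continuous_const hc1) (isOpen_lt continuous_const hc2)
      · constructor
        · exact dist_pos.mpr hne
        · rw [ha1]; norm_num
    rw [frontier, mem_diff] at ha
    exact ha.2 this
  have hf₀cont : Continuous f₀ := by
    refine Continuous.if ?_ (by fun_prop) (by fun_prop)
    exact fun a ha => (hfront a ha).symm
  obtain ⟨U, hAU, hUopen, F, hF⟩ := hZe ((Z × Z) × unitInterval) A hAclosed ⟨f₀, hf₀cont⟩
  set W : Set (Z × Z) := {w | ∀ t, (w, t) ∈ U} with hWdef
  have hWdiag : ∀ z : Z, (z, z) ∈ W := fun z t => hAU (Or.inr (Or.inr rfl))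
  have hG : Continuous fun p : ↥W × unitInterval => F ⟨(p.1.1, p.2), p.1.2 p.2⟩ :=
    F.continuous.comp (Continuous.subtype_mk (by fun_prop) _)
  refine ⟨W, ContinuousMap.curry ⟨_, hG⟩, isOpen_tube hUopen, hWdiag, ?_, ?_, ?_⟩
  · intro w
    have hmem : ((w : Z × Z), (0 : unitInterval)) ∈ A := Or.inl rfl
    have := hF ((w : Z × Z), 0) hmem
    simp only [curry_apply, ContinuousMap.coe_mk]
    rw [this]
    simp only [ContinuousMap.coe_mk, hf₀def]
    split_ifs with h
    · exact absurd h (by norm_num [Subtype.ext_iff])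
    · rfl
  · intro w
    have hmem : ((w : Z × Z), (1 : unitInterval)) ∈ A := Or.inr (Or.inl rfl)
    have := hF ((w : Z × Z), 1) hmem
    simp only [curry_apply, ContinuousMap.coe_mk]
    rw [this]
    simp only [ContinuousMap.coe_mk, hf₀def]
    split_ifs with h
    · rfl
    · exact absurd trivial h
  · intro z hz t
    have hmem : (((z, z) : Z × Z), t) ∈ A := Or.inr (Or.inr rfl)
    have := hF ((z, z), t) hmem
    simp only [curry_apply, ContinuousMap.coe_mk]
    rw [this]
    simp only [ContinuousMap.coe_mk, hf₀def]
    split_ifs <;> rfl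

theorem continuousAt_eval_comp_of_const {T : Type*} {Z : Type*} [TopologicalSpace T]
    [MetricSpace Z] {G : T → C(unitInterval, Z)} (s : T → unitInterval) {p₀ : T}
    (hG : ContinuousAt G p₀) (hconst : ∀ t t', G p₀ t = G p₀ t') :
    ContinuousAt (fun p => G p (s p)) p₀ := by
  have key : Tendsto (fun p => G p (s p)) (nhds p₀) (nhds (G p₀ (s p₀))) := by
    rw [Metric.tendsto_nhds]
    intro ε hε
    have hG' : ∀ᶠ p in nhds p₀, dist (G p) (G p₀) < ε := by
      have := Metric.tendsto_nhds.mp hG ε hε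
      exact this
    filter_upwards [hG'] with p hp
    calc dist (G p (s p)) (G p₀ (s p₀)) = dist (G p (s p)) (G p₀ (s p)) := by
          rw [← hconst (s p) (s p₀)]
      _ ≤ dist (G p) (G p₀) := ContinuousMap.dist_apply_le_dist _
      _ < ε := hp
  exact key

theorem stmt16' {X Y : Type u} [TopologicalSpace X] [TopologicalSpace Y]
    {Z : Type u} [MetricSpace Z]
    (W : Set (Z × Z)) (Lam : C(W, C(unitInterval, Z)))
    (hWopen : IsOpen W) (hWdiag : ∀ z : Z, (z, z) ∈ W)
    (hL0 : ∀ w : W, Lam w 0 = (w : Z × Z).1)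
    (hL1 : ∀ w : W, Lam w 1 = (w : Z × Z).2)
    (hLd : ∀ (z : Z) (hz : (z, z) ∈ W) (t : unitInterval), Lam ⟨(z, z), hz⟩ t = z)
    (retract : ∀ (C O : Set (X × Y × C(unitInterval, Z))), IsOpen O → ∀ hCO : C ⊆ O,
      ∀ (r : C(O, C)), (∀ (p : X × Y × C(unitInterval, Z)) (hp : p ∈ C), r ⟨p, hCO hp⟩ = ⟨p, hp⟩) →
      IsANR C)
    (f : C(X, Z)) (g : C(Y, Z)) :
    IsANR {w : X × Y × C(unitInterval, Z) // w.2.2 0 = f w.1 ∧ w.2.2 1 = g w.2.1} := by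
  classical
  set O : Set (X × Y × C(unitInterval, Z)) :=
    {w | (f w.1, w.2.2 0) ∈ W ∧ (g w.2.1, w.2.2 1) ∈ W ∧
      dist (f w.1) (w.2.2 0) < 4⁻¹ ∧ dist (g w.2.1) (w.2.2 1) < 4⁻¹} with hOdef
  have hev0 : Continuous fun w : X × Y × C(unitInterval, Z) => w.2.2 0 :=
    (ContinuousEvalConst.continuous_eval_const (0 : unitInterval)).comp
      (continuous_snd.comp continuous_snd)
  have hev1 : Continuous fun w : X × Y × C(unitInterval, Z) => w.2.2 1 :=
    (ContinuousEvalConst.continuous_eval_const (1 : unitInterval)).comp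
      (continuous_snd.comp continuous_snd)
  have hp1 : Continuous fun w : X × Y × C(unitInterval, Z) => (f w.1, w.2.2 0) :=
    (f.continuous.comp continuous_fst).prodMk hev0
  have hp2 : Continuous fun w : X × Y × C(unitInterval, Z) => (g w.2.1, w.2.2 1) :=
    (g.continuous.comp (continuous_fst.comp continuous_snd)).prodMk hev1
  have hd1 : Continuous fun w : X × Y × C(unitInterval, Z) => dist (f w.1) (w.2.2 0) :=
    (f.continuous.comp continuous_fst).dist hev0
  have hd2 : Continuous fun w : X × Y × C(unitInterval, Z) => dist (g w.2.1) (w.2.2 1) :=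
    (g.continuous.comp (continuous_fst.comp continuous_snd)).dist hev1
  have hOopen : IsOpen O := by
    refine IsOpen.and (hWopen.preimage hp1) (IsOpen.and (hWopen.preimage hp2)
      (IsOpen.and (isOpen_lt hd1 continuous_const) (isOpen_lt hd2 continuous_const)))
  have hCO : {w : X × Y × C(unitInterval, Z) | w.2.2 0 = f w.1 ∧ w.2.2 1 = g w.2.1} ⊆ O := by
    rintro w ⟨h0, h1⟩
    refine ⟨by rw [h0]; exact hWdiag _, by rw [h1]; exact hWdiag _, ?_, ?_⟩
    · rw [h0, dist_self]; norm_num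
    · rw [h1, dist_self]; norm_num
  -- abbreviations
  set cut : ℝ → unitInterval := fun r => Set.projIcc (0 : ℝ) 1 zero_le_one r with hcutdef
  have hcut0 : cut 0 = 0 := by rw [hcutdef]; exact Set.projIcc_left _
  have hcut1 : cut 1 = 1 := by rw [hcutdef]; exact Set.projIcc_right _
  have hcutval : ∀ t : unitInterval, cut (t : ℝ) = t := fun t => Set.projIcc_val zero_le_one t
  set dd1 : O → ℝ := fun p => dist (f p.1.1) (p.1.2.2 0) with hdd1def
  set dd2 : O → ℝ := fun p => dist (g p.1.2.1) (p.1.2.2 1) with hdd2def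
  have hdd1c : Continuous dd1 := hd1.comp continuous_subtype_val
  have hdd2c : Continuous dd2 := hd2.comp continuous_subtype_val
  have hdd1nn : ∀ p : O, 0 ≤ dd1 p := fun p => dist_nonneg
  have hdd2nn : ∀ p : O, 0 ≤ dd2 p := fun p => dist_nonneg
  have hdd1lt : ∀ p : O, dd1 p < 4⁻¹ := fun p => p.2.2.2.1
  have hdd2lt : ∀ p : O, dd2 p < 4⁻¹ := fun p => p.2.2.2.2
  set q1 : O → W := fun p => ⟨(f p.1.1, p.1.2.2 0), p.2.1⟩ with hq1def
  set q2 : O → W := fun p => ⟨(g p.1.2.1, p.1.2.2 1), p.2.2.1⟩ with hq2def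
  have hq1c : Continuous fun p : O => (Lam (q1 p) : C(unitInterval, Z)) :=
    Lam.continuous.comp ((hp1.comp continuous_subtype_val).subtype_mk _)
  have hq2c : Continuous fun p : O => (Lam (q2 p) : C(unitInterval, Z)) :=
    Lam.continuous.comp ((hp2.comp continuous_subtype_val).subtype_mk _)
  set h1f : O × unitInterval → Z :=
    fun q => Lam (q1 q.1) (cut ((q.2 : ℝ) / dd1 q.1)) with hh1def
  set h2f : O × unitInterval → Z :=
    fun q => Lam (q2 q.1) (cut ((1 - (q.2 : ℝ)) / dd2 q.1)) with hh2def
  set h3f : O × unitInterval → Z :=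
    fun q => q.1.1.2.2 (cut (((q.2 : ℝ) - dd1 q.1) / (1 - dd1 q.1 - dd2 q.1))) with hh3def
  have htc : Continuous fun q : O × unitInterval => ((q.2 : ℝ)) :=
    continuous_subtype_val.comp continuous_snd
  have hden : ∀ q : O × unitInterval, 1 - dd1 q.1 - dd2 q.1 ≠ 0 := by
    intro q
    have h1 := hdd1lt q.1; have h2 := hdd2lt q.1
    have h3 := hdd1nn q.1; have h4 := hdd2nn q.1
    have : (4 : ℝ)⁻¹ = 1/4 := by norm_num
    rw [this] at h1 h2
    intro h; linarith
  have h1cont : Continuous h1f := by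
    rw [continuous_iff_continuousAt]
    intro q₀
    rcases eq_or_lt_of_le (hdd1nn q₀.1) with hz0 | hpos
    · refine continuousAt_eval_comp_of_const
        (G := fun q : O × unitInterval => Lam (q1 q.1)) _
        ((hq1c.comp continuous_fst).continuousAt) ?_
      intro t t'
      have heq : f q₀.1.1.1 = q₀.1.1.2.2 0 := dist_eq_zero.mp hz0.symm
      have e : q1 q₀.1 = ⟨(f q₀.1.1.1, f q₀.1.1.1), hWdiag _⟩ :=
        Subtype.ext (Prod.ext rfl heq.symm)
      show Lam (q1 q₀.1) t = Lam (q1 q₀.1) t'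
      rw [e, hLd _ (hWdiag _) t, hLd _ (hWdiag _) t']
    · have hsc : ContinuousAt (fun q : O × unitInterval => cut ((q.2 : ℝ) / dd1 q.1)) q₀ := by
        apply continuous_projIcc.continuousAt.comp
        exact ContinuousAt.div htc.continuousAt
          ((hdd1c.comp continuous_fst).continuousAt) (ne_of_gt hpos)
      exact ContinuousEval.continuous_eval.continuousAt.comp
        (((hq1c.comp continuous_fst).continuousAt).prodMk hsc)
  have h2cont : Continuous h2f := by
    rw [continuous_iff_continuousAt]
    intro q₀
    rcases eq_or_lt_of_le (hdd2nn q₀.1) with hz0 | hpos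
    · refine continuousAt_eval_comp_of_const
        (G := fun q : O × unitInterval => Lam (q2 q.1)) _
        ((hq2c.comp continuous_fst).continuousAt) ?_
      intro t t'
      have heq : g q₀.1.1.2.1 = q₀.1.1.2.2 1 := dist_eq_zero.mp hz0.symm
      have e : q2 q₀.1 = ⟨(g q₀.1.1.2.1, g q₀.1.1.2.1), hWdiag _⟩ :=
        Subtype.ext (Prod.ext rfl heq.symm)
      show Lam (q2 q₀.1) t = Lam (q2 q₀.1) t'
      rw [e, hLd _ (hWdiag _) t, hLd _ (hWdiag _) t']
    · have hsc : ContinuousAt (fun q : O × unitInterval => cut ((1 - (q.2 : ℝ)) / dd2 q.1)) q₀ := by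
        apply continuous_projIcc.continuousAt.comp
        exact ContinuousAt.div (continuous_const.sub htc).continuousAt
          ((hdd2c.comp continuous_fst).continuousAt) (ne_of_gt hpos)
      exact ContinuousEval.continuous_eval.continuousAt.comp
        (((hq2c.comp continuous_fst).continuousAt).prodMk hsc)
  have halc : Continuous fun q : O × unitInterval => (q.1.1.2.2 : C(unitInterval, Z)) := by
    fun_prop
  have h3cont : Continuous h3f := by
    have hden' : Continuous fun q : O × unitInterval =>
        ((q.2 : ℝ) - dd1 q.1) / (1 - dd1 q.1 - dd2 q.1) :=
      (htc.sub (hdd1c.comp continuous_fst)).div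
        ((continuous_const.sub (hdd1c.comp continuous_fst)).sub (hdd2c.comp continuous_fst)) hden
    have hsc : Continuous fun q : O × unitInterval =>
        cut (((q.2 : ℝ) - dd1 q.1) / (1 - dd1 q.1 - dd2 q.1)) := continuous_projIcc.comp hden'
    exact ContinuousEval.continuous_eval.comp (halc.prodMk hsc)
  -- boundary agreements
  have hbd23 : ∀ q : O × unitInterval, 1 - dd2 q.1 = (q.2 : ℝ) → h2f q = h3f q := by
    intro q hq
    rw [hh2def, hh3def]
    simp only
    rcases eq_or_lt_of_le (hdd2nn q.1) with hz0 | hpos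
    · have heq : g q.1.1.2.1 = q.1.1.2.2 1 := dist_eq_zero.mp hz0.symm
      have e2 : (1 - (q.2 : ℝ)) / dd2 q.1 = 0 := by
        rw [show (1 : ℝ) - (q.2 : ℝ) = 0 by linarith, zero_div]
      have e3 : ((q.2 : ℝ) - dd1 q.1) / (1 - dd1 q.1 - dd2 q.1) = 1 := by
        rw [div_eq_one_iff_eq (hden q)]; linarith
      rw [e2, e3, hcut0, hcut1, hL0]
      exact heq
    · have e2 : (1 - (q.2 : ℝ)) / dd2 q.1 = 1 := by
        rw [div_eq_one_iff_eq (ne_of_gt hpos)]; linarith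
      have e3 : ((q.2 : ℝ) - dd1 q.1) / (1 - dd1 q.1 - dd2 q.1) = 1 := by
        rw [div_eq_one_iff_eq (hden q)]; linarith
      rw [e2, e3, hcut1, hL1]
  have hbd1 : ∀ q : O × unitInterval, (q.2 : ℝ) = dd1 q.1 →
      h1f q = if 1 - dd2 q.1 ≤ (q.2 : ℝ) then h2f q else h3f q := by
    intro q hq
    have hnot : ¬ (1 - dd2 q.1 ≤ (q.2 : ℝ)) := by
      have h1 := hdd1lt q.1; have h2 := hdd2lt q.1
      rw [hq]
      intro h; rw [show (4:ℝ)⁻¹ = 1/4 by norm_num] at h1 h2; linarith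
    rw [if_neg hnot, hh1def, hh3def]
    simp only
    have e3 : ((q.2 : ℝ) - dd1 q.1) / (1 - dd1 q.1 - dd2 q.1) = 0 := by
      rw [hq]; simp
    rw [e3, hcut0]
    rcases eq_or_lt_of_le (hdd1nn q.1) with hz0 | hpos
    · have heq : f q.1.1.1 = q.1.1.2.2 0 := dist_eq_zero.mp hz0.symm
      have e : q1 q.1 = ⟨(f q.1.1.1, f q.1.1.1), hWdiag _⟩ :=
        Subtype.ext (Prod.ext rfl heq.symm)
      rw [e, hLd]
      exact heq
    · have e1 : (q.2 : ℝ) / dd1 q.1 = 1 := by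
        rw [div_eq_one_iff_eq (ne_of_gt hpos)]; linarith
      rw [e1, hcut1, hL1]
  set Bf : O × unitInterval → Z := fun q =>
    if (q.2 : ℝ) ≤ dd1 q.1 then h1f q
    else if 1 - dd2 q.1 ≤ (q.2 : ℝ) then h2f q else h3f q with hBdef
  have hBc : Continuous Bf := by
    rw [hBdef]
    refine Continuous.if_le h1cont ?_ htc (hdd1c.comp continuous_fst) hbd1
    exact Continuous.if_le h2cont h3cont
      (continuous_const.sub (hdd2c.comp continuous_fst)) htc hbd23
  set Beta : C(O, C(unitInterval, Z)) := ContinuousMap.curry ⟨Bf, hBc⟩ with hBetadef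
  have hBapp : ∀ (p : O) (t : unitInterval), Beta p t = Bf (p, t) := fun p t => rfl
  have hB0 : ∀ p : O, Beta p 0 = f p.1.1 := by
    intro p
    rw [hBapp, hBdef]
    simp only
    rw [if_pos]
    · rw [hh1def]
      simp only
      have : ((0 : unitInterval) : ℝ) / dd1 p = 0 := by norm_num
      rw [this, hcut0, hL0, hq1def]
    · show ((0 : unitInterval) : ℝ) ≤ dd1 p
      rw [show ((0 : unitInterval) : ℝ) = 0 by norm_num]
      exact hdd1nn p
  have hB1 : ∀ p : O, Beta p 1 = g p.1.2.1 := by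
    intro p
    rw [hBapp, hBdef]
    simp only
    rw [if_neg, if_pos]
    · rw [hh2def]
      simp only
      have : (1 - ((1 : unitInterval) : ℝ)) / dd2 p = 0 := by norm_num
      rw [this, hcut0, hL0, hq2def]
    · show 1 - dd2 p ≤ ((1 : unitInterval) : ℝ)
      rw [show ((1 : unitInterval) : ℝ) = 1 by norm_num]
      linarith [hdd2nn p]
    · show ¬ (((1 : unitInterval) : ℝ) ≤ dd1 p)
      rw [show ((1 : unitInterval) : ℝ) = 1 by norm_num]
      have := hdd1lt p
      intro h; rw [show (4:ℝ)⁻¹ = 1/4 by norm_num] at this; linarith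
  have hrc : Continuous fun p : O =>
      ((p.1.1, p.1.2.1, Beta p) : X × Y × C(unitInterval, Z)) := by
    have c1 : Continuous fun p : O => p.1.1 := by fun_prop
    have c2 : Continuous fun p : O => p.1.2.1 := by fun_prop
    exact c1.prodMk (c2.prodMk Beta.continuous)
  set r : C(O, {w : X × Y × C(unitInterval, Z) // w.2.2 0 = f w.1 ∧ w.2.2 1 = g w.2.1}) :=
    ⟨fun p => ⟨(p.1.1, p.1.2.1, Beta p), hB0 p, hB1 p⟩, hrc.subtype_mk _⟩ with hrdef
  refine retract _ O hOopen hCO r ?_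
  intro w hw
  apply Subtype.ext
  show (w.1, w.2.1, Beta ⟨w, hCO hw⟩) = w
  have hd1w : dd1 ⟨w, hCO hw⟩ = 0 := by rw [hdd1def]; simp only; rw [hw.1, dist_self]
  have hd2w : dd2 ⟨w, hCO hw⟩ = 0 := by rw [hdd2def]; simp only; rw [hw.2, dist_self]
  refine Prod.ext rfl (Prod.ext rfl ?_)
  ext t
  rw [hBapp, hBdef]
  simp only
  split_ifs with hc1 hc2
  · -- t = 0 case
    rw [hd1w] at hc1
    have ht0 : t = 0 := by
      apply Subtype.ext
      rw [show ((0 : unitInterval) : ℝ) = 0 by norm_num]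
      have := t.2.1; linarith
    rw [hh1def]
    simp only
    have heq : f w.1 = w.2.2 0 := hw.1.symm
    have e : q1 ⟨w, hCO hw⟩ = ⟨(f w.1, f w.1), hWdiag _⟩ :=
      Subtype.ext (Prod.ext rfl heq.symm)
    rw [e, hLd, ht0]
    exact heq
  · -- t = 1 case
    rw [hd2w] at hc2
    have ht1 : t = 1 := by
      apply Subtype.ext
      rw [show ((1 : unitInterval) : ℝ) = 1 by norm_num]
      have := t.2.2; linarith
    rw [hh2def]
    simp only
    have heq : g w.2.1 = w.2.2 1 := hw.2.symm
    have e : q2 ⟨w, hCO hw⟩ = ⟨(g w.2.1, g w.2.1), hWdiag _⟩ :=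
      Subtype.ext (Prod.ext rfl heq.symm)
    rw [e, hLd, ht1]
    exact heq
  · -- middle
    rw [hh3def]
    simp only
    rw [hd1w, hd2w]
    have : ((t : ℝ) - 0) / (1 - 0 - 0) = (t : ℝ) := by norm_num
    rw [this, hcutval]

theorem stmt16 {X Y Z : Type u} [TopologicalSpace X] [TopologicalSpace Y] [TopologicalSpace Z]
    (hX : IsANR X) (hY : IsANR Y) (hZ : IsANR Z)
    (f : C(X, Z)) (g : C(Y, Z)) :
    IsANR {w : X × Y × C(unitInterval, Z) // w.2.2 0 = f w.1 ∧ w.2.2 1 = g w.2.1} := by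
  haveI := hZ.1
  letI : MetricSpace Z := TopologicalSpace.metrizableSpaceMetric Z
  obtain ⟨W, Lam, hWopen, hWdiag, hL0, hL1, hLd⟩ := exists_ulc hZ
  have hP : IsANR (X × Y × C(unitInterval, Z)) :=
    isANR_prod hX (isANR_prod hY (isANR_pathSpace hZ))
  exact stmt16' W Lam hWopen hWdiag hL0 hL1 hLd
    (fun C O hO hCO r hr => isANR_of_retract hP C O hO hCO r hr) f g
end
end

section
/- Let φ : K → X and p : A → X be continuous maps, let E_{φ,p} = {(k,a,θ) ∈ K × A × X^I : θ(0) = φ(k), θ(1) = p(a)} be their standard homotopy pullback, and let p̄ : E_{φ,p} → K be the projection (k,a,θ) ↦ k. Then secat_{g;φ}(p) = secat_g(p̄). -/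
open ContinuousMap Set

noncomputable section

/-- The generalized sectional category of `p : A → X` relative to `φ : K → X`: covers of `K` by
arbitrary (not necessarily open) `φ`-sectional subsets. -/
def grelSecat {K X A : Type*} [TopologicalSpace K] [TopologicalSpace X] [TopologicalSpace A]
    (φ : C(K, X)) (p : C(A, X)) : ℕ∞ :=
  sInf {n : ℕ∞ | ∃ k : ℕ, n = (k : ℕ∞) ∧ ∃ U : Fin (k + 1) → Set K,
    (⋃ i, U i) = Set.univ ∧
    ∀ i, ∃ s : C(U i, A), (p.comp s).Homotopic (φ.comp (restr (U i)))}

lemma key_s17 {K X A : Type*} [TopologicalSpace K] [TopologicalSpace X] [TopologicalSpace A]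
    (φ : C(K, X)) (p : C(A, X)) (U : Set K) :
    (∃ s : C(U, A), (p.comp s).Homotopic (φ.comp (restr U))) ↔
    (∃ t : C(U, {z : K × A × C(unitInterval, X) // z.2.2 0 = φ z.1 ∧ z.2.2 1 = p z.2.1}),
      ((⟨fun z => z.val.1, continuous_subtype_val.fst⟩ :
        C({z : K × A × C(unitInterval, X) // z.2.2 0 = φ z.1 ∧ z.2.2 1 = p z.2.1}, K)).comp t).Homotopic
        (restr U)) := by
  constructor
  · rintro ⟨s, ⟨H⟩⟩
    have hGcont : Continuous fun q : U × unitInterval => H (unitInterval.symm q.2, q.1) :=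
      H.continuous.comp ((unitInterval.continuous_symm.comp continuous_snd).prodMk continuous_fst)
    set G : C(U × unitInterval, X) := ⟨_, hGcont⟩ with hG
    refine ⟨⟨fun u => ⟨(u.val, s u, G.curry u), ?_, ?_⟩, ?_⟩, ?_⟩
    · show G (u, 0) = φ u.val
      have := H.apply_one u
      simpa [hG, restr] using this
    · show G (u, 1) = p (s u)
      have := H.apply_zero u
      simpa [hG, restr] using this
    · exact Continuous.subtype_mk
        (continuous_subtype_val.prodMk ((map_continuous s).prodMk (map_continuous G.curry))) _
    · exact ⟨ContinuousMap.Homotopy.refl (restr U)⟩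
  · rintro ⟨t, ⟨Ht⟩⟩
    refine ⟨⟨fun u => (t u).val.2.1,
      (continuous_fst.comp (continuous_snd.comp (continuous_subtype_val.comp (map_continuous t))))⟩,
      ?_⟩
    -- Step 1: p ∘ s homotopic to φ ∘ (pbar ∘ t)
    have hF : Continuous fun q : unitInterval × U => ((t q.2).val.2.2 : C(unitInterval, X)) (unitInterval.symm q.1) := by
      exact (ContinuousEval.continuous_eval.comp
        (((continuous_snd.comp (continuous_snd.comp (continuous_subtype_val.comp (map_continuous t)))).comp continuous_snd).prodMk
          (unitInterval.continuous_symm.comp continuous_fst)))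
    have h1 : (p.comp ⟨fun u => (t u).val.2.1, (continuous_fst.comp (continuous_snd.comp (continuous_subtype_val.comp (map_continuous t))))⟩).Homotopic
        (φ.comp (ContinuousMap.comp ⟨fun z => z.val.1, continuous_subtype_val.fst⟩ t)) := by
      refine ⟨⟨⟨_, hF⟩, ?_, ?_⟩⟩
      · intro u
        have := ((t u).prop).2
        simpa [unitInterval.symm_zero] using this
      · intro u
        have := ((t u).prop).1
        simpa [unitInterval.symm_one] using this
    have h2 := ContinuousMap.Homotopic.comp (ContinuousMap.Homotopic.refl φ) ⟨Ht⟩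
    exact h1.trans h2

theorem stmt17 {K X A : Type*} [TopologicalSpace K] [TopologicalSpace X] [TopologicalSpace A]
    (φ : C(K, X)) (p : C(A, X)) :
    grelSecat φ p =
      gsecat (⟨fun z : {z : K × A × C(unitInterval, X) // z.2.2 0 = φ z.1 ∧ z.2.2 1 = p z.2.1} =>
        z.val.1, continuous_subtype_val.fst⟩ :
        C({z : K × A × C(unitInterval, X) // z.2.2 0 = φ z.1 ∧ z.2.2 1 = p z.2.1}, K)) := by
  unfold grelSecat gsecat
  congr 1
  ext n
  simp only [Set.mem_setOf_eq]
  constructor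
  · rintro ⟨k, hk, U, hU, hs⟩
    exact ⟨k, hk, U, hU, fun i => (key_s17 φ p (U i)).mp (hs i)⟩
  · rintro ⟨k, hk, U, hU, hs⟩
    exact ⟨k, hk, U, hU, fun i => (key_s17 φ p (U i)).mpr (hs i)⟩
end
end

section
/- Let φ : K → X, p : A → X, ψ : L → Y, q : B → Y be continuous maps, and let α : K → L, β : X → Y, γ : A → B be homotopy equivalences such that ψ ∘ α is homotopic to β ∘ φ and q ∘ γ is homotopic to β ∘ p. Then secat_{g;φ}(p) = secat_{g;ψ}(q). -/
open ContinuousMap Set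

noncomputable section

lemma comp_congr_left {Z W V : Type*} [TopologicalSpace Z] [TopologicalSpace W]
    [TopologicalSpace V] (f : C(Z, W)) {g h : C(W, V)} (hgh : g.Homotopic h) :
    (g.comp f).Homotopic (h.comp f) :=
  ContinuousMap.Homotopic.comp hgh (ContinuousMap.Homotopic.refl f)

lemma comp_congr_right {Z W V : Type*} [TopologicalSpace Z] [TopologicalSpace W]
    [TopologicalSpace V] {g h : C(Z, W)} (f : C(W, V)) (hgh : g.Homotopic h) :
    (f.comp g).Homotopic (f.comp h) :=
  ContinuousMap.Homotopic.comp (ContinuousMap.Homotopic.refl f) hgh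

lemma grelSecat_le_aux {K X A L Y B : Type*} [TopologicalSpace K] [TopologicalSpace X]
    [TopologicalSpace A] [TopologicalSpace L] [TopologicalSpace Y] [TopologicalSpace B]
    (φ : C(K, X)) (p : C(A, X)) (ψ : C(L, Y)) (q : C(B, Y))
    (α : C(K, L)) (β : C(X, Y)) (γ : C(A, B)) (α' : C(L, K))
    (hαα' : (α.comp α').Homotopic (ContinuousMap.id L))
    (h1 : (ψ.comp α).Homotopic (β.comp φ)) (h2 : (q.comp γ).Homotopic (β.comp p)) :
    grelSecat ψ q ≤ grelSecat φ p := by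
  apply sInf_le_sInf
  rintro n ⟨k, rfl, U, hcov, hsec⟩
  refine ⟨k, rfl, fun i => α' ⁻¹' (U i), ?_, ?_⟩
  · rw [← Set.preimage_iUnion, hcov, Set.preimage_univ]
  · intro i
    obtain ⟨s, hs⟩ := hsec i
    set V : Set L := α' ⁻¹' (U i)
    have hr : Continuous (fun x : V => (⟨α' x.1, x.2⟩ : U i)) :=
      Continuous.subtype_mk (α'.continuous.comp continuous_subtype_val) _
    let r : C(V, U i) := ⟨_, hr⟩
    refine ⟨γ.comp (s.comp r), ?_⟩
    have e1 : (q.comp (γ.comp (s.comp r))) = (q.comp γ).comp (s.comp r) := rfl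
    have step1 : (q.comp (γ.comp (s.comp r))).Homotopic ((β.comp p).comp (s.comp r)) := by
      rw [e1]; exact ContinuousMap.Homotopic.comp h2 (ContinuousMap.Homotopic.refl _)
    have e2 : (β.comp p).comp (s.comp r) = β.comp ((p.comp s).comp r) := rfl
    have step2 : ((β.comp p).comp (s.comp r)).Homotopic (β.comp ((φ.comp (restr (U i))).comp r)) := by
      rw [e2]
      exact ContinuousMap.Homotopic.comp (ContinuousMap.Homotopic.refl β) (ContinuousMap.Homotopic.comp hs (ContinuousMap.Homotopic.refl r))
    have e3 : β.comp ((φ.comp (restr (U i))).comp r) = (β.comp φ).comp (α'.comp (restr V)) := rfl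
    have step3 : (β.comp ((φ.comp (restr (U i))).comp r)).Homotopic
        ((ψ.comp α).comp (α'.comp (restr V))) := by
      rw [e3]
      exact ContinuousMap.Homotopic.comp h1.symm (ContinuousMap.Homotopic.refl (α'.comp (restr V)))
    have e4 : (ψ.comp α).comp (α'.comp (restr V)) = ψ.comp ((α.comp α').comp (restr V)) := rfl
    have step4 : ((ψ.comp α).comp (α'.comp (restr V))).Homotopic (ψ.comp (restr V)) := by
      rw [e4]
      have : ((α.comp α').comp (restr V)).Homotopic (restr V) := by
        have := ContinuousMap.Homotopic.comp hαα' (ContinuousMap.Homotopic.refl (restr V))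
        simpa using this
      exact ContinuousMap.Homotopic.comp (ContinuousMap.Homotopic.refl ψ) this
    exact ((step1.trans step2).trans step3).trans step4

theorem stmt18 {K X A L Y B : Type*} [TopologicalSpace K] [TopologicalSpace X]
    [TopologicalSpace A] [TopologicalSpace L] [TopologicalSpace Y] [TopologicalSpace B]
    (φ : C(K, X)) (p : C(A, X)) (ψ : C(L, Y)) (q : C(B, Y))
    (α : C(K, L)) (β : C(X, Y)) (γ : C(A, B))
    (hα : IsHtpyEquiv α) (hβ : IsHtpyEquiv β) (hγ : IsHtpyEquiv γ)
    (h1 : (ψ.comp α).Homotopic (β.comp φ)) (h2 : (q.comp γ).Homotopic (β.comp p)) :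
    grelSecat φ p = grelSecat ψ q := by
  obtain ⟨α', hα'α, hαα'⟩ := hα
  obtain ⟨β', hβ'β, hββ'⟩ := hβ
  obtain ⟨γ', hγ'γ, hγγ'⟩ := hγ
  -- derived homotopies for the reverse direction
  have h1' : (φ.comp α').Homotopic (β'.comp ψ) := by
    have s1 : (φ.comp α').Homotopic ((β'.comp β).comp (φ.comp α')) := by
      have := comp_congr_left (φ.comp α') hβ'β
      simpa using this.symm
    have s2 : ((β'.comp β).comp (φ.comp α')).Homotopic (β'.comp ((ψ.comp α).comp α')) := by
      have : ((β.comp φ).comp α').Homotopic ((ψ.comp α).comp α') :=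
        comp_congr_left α' h1.symm
      exact comp_congr_right β' this
    have s3 : (β'.comp ((ψ.comp α).comp α')).Homotopic (β'.comp ψ) := by
      have : ((ψ.comp α).comp α').Homotopic ψ := by
        have := comp_congr_right ψ hαα'
        simpa using this
      exact comp_congr_right β' this
    exact (s1.trans s2).trans s3
  have h2' : (p.comp γ').Homotopic (β'.comp q) := by
    have s1 : (p.comp γ').Homotopic ((β'.comp β).comp (p.comp γ')) := by
      have := comp_congr_left (p.comp γ') hβ'β
      simpa using this.symm
    have s2 : ((β'.comp β).comp (p.comp γ')).Homotopic (β'.comp ((q.comp γ).comp γ')) := by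
      have : ((β.comp p).comp γ').Homotopic ((q.comp γ).comp γ') :=
        comp_congr_left γ' h2.symm
      exact comp_congr_right β' this
    have s3 : (β'.comp ((q.comp γ).comp γ')).Homotopic (β'.comp q) := by
      have : ((q.comp γ).comp γ').Homotopic q := by
        have := comp_congr_right q hγγ'
        simpa using this
      exact comp_congr_right β' this
    exact (s1.trans s2).trans s3
  apply le_antisymm
  · exact grelSecat_le_aux ψ q φ p α' β' γ' α hα'α h1' h2'
  · exact grelSecat_le_aux φ p ψ q α β γ α' hαα' h1 h2
end
end

section
/- Let φ : K → X and p : A → X be continuous maps, where K, X, and A each have the homotopy type of an ANR space (i.e., each is homotopy equivalent to some ANR space). Then secat_φ(p) = secat_{g;φ}(p). -/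
open ContinuousMap Set

noncomputable section

universe u v

/-- `X` has the homotopy type of an ANR space. -/
def HasANRHomotopyType (X : Type u) [TopologicalSpace X] : Prop :=
  ∃ (Z : Type u) (i : TopologicalSpace Z), @IsANR Z i ∧
    Nonempty (@ContinuousMap.HomotopyEquiv X Z _ i)

namespace S19

/-- `U` is a `φ`-sectional subset for `p`. -/
def Sect {K X A : Type*} [TopologicalSpace K] [TopologicalSpace X] [TopologicalSpace A]
    (φ : C(K, X)) (p : C(A, X)) (U : Set K) : Prop :=
  ∃ s : C(U, A), (p.comp s).Homotopic (φ.comp (restr U))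

section Transport

variable {K X A K' X' A' K₂ X₂ A₂ : Type*}
  [TopologicalSpace K] [TopologicalSpace X] [TopologicalSpace A]
  [TopologicalSpace K'] [TopologicalSpace X'] [TopologicalSpace A']
  [TopologicalSpace K₂] [TopologicalSpace X₂] [TopologicalSpace A₂]

theorem grel_le_rel (φ : C(K, X)) (p : C(A, X)) : grelSecat φ p ≤ relSecat φ p := by
  apply sInf_le_sInf
  rintro n ⟨k, rfl, U, _, hcov, hsec⟩
  exact ⟨k, rfl, U, hcov, hsec⟩

theorem rel_le_of_pullback (φ : C(K, X)) (p : C(A, X)) (h : C(K₂, K))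
    (φ₂ : C(K₂, X₂)) (p₂ : C(A₂, X₂))
    (hs : ∀ V : Set K, Sect φ p V → Sect φ₂ p₂ (h ⁻¹' V)) :
    relSecat φ₂ p₂ ≤ relSecat φ p := by
  apply sInf_le_sInf
  rintro n ⟨k, rfl, U, hop, hcov, hsec⟩
  exact ⟨k, rfl, fun i => h ⁻¹' (U i), fun i => (hop i).preimage h.continuous,
    by rw [← Set.preimage_iUnion, hcov, Set.preimage_univ], fun i => hs _ (hsec i)⟩

theorem grel_le_of_pullback (φ : C(K, X)) (p : C(A, X)) (h : C(K₂, K))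
    (φ₂ : C(K₂, X₂)) (p₂ : C(A₂, X₂))
    (hs : ∀ V : Set K, Sect φ p V → Sect φ₂ p₂ (h ⁻¹' V)) :
    grelSecat φ₂ p₂ ≤ grelSecat φ p := by
  apply sInf_le_sInf
  rintro n ⟨k, rfl, U, hcov, hsec⟩
  exact ⟨k, rfl, fun i => h ⁻¹' (U i),
    by rw [← Set.preimage_iUnion, hcov, Set.preimage_univ], fun i => hs _ (hsec i)⟩

/-- The restriction-corestriction of `h` to a preimage. -/
def restrMap (h : C(K₂, K)) (V : Set K) : C((h ⁻¹' V : Set K₂), (V : Set K)) :=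
  ⟨fun x => ⟨h x, x.2⟩, ((h.continuous.comp continuous_subtype_val).subtype_mk _)⟩

theorem hwhisker_left {Y Z W : Type*} [TopologicalSpace Y] [TopologicalSpace Z]
    [TopologicalSpace W] {f g : C(Y, Z)} (H : f.Homotopic g) (u : C(W, Y)) :
    (f.comp u).Homotopic (g.comp u) :=
  H.comp (ContinuousMap.Homotopic.refl u)

theorem hwhisker_right {Y Z W : Type*} [TopologicalSpace Y] [TopologicalSpace Z]
    [TopologicalSpace W] {f g : C(W, Y)} (H : f.Homotopic g) (u : C(Y, Z)) :
    (u.comp f).Homotopic (u.comp g) :=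
  (ContinuousMap.Homotopic.refl u).comp H

theorem sect_to_model (eK : HomotopyEquiv K K') (eX : HomotopyEquiv X X')
    (eA : HomotopyEquiv A A') (φ : C(K, X)) (p : C(A, X)) (U : Set K)
    (h : Sect φ p U) :
    Sect (eX.toFun.comp (φ.comp eK.invFun))
      (eX.toFun.comp (p.comp eA.invFun))
      (eK.invFun ⁻¹' U) := by
  set fX := eX.toFun
  set gK := eK.invFun
  set gA := eA.invFun
  set fA := eA.toFun
  obtain ⟨s, hs⟩ := h
  set r := restrMap gK U
  refine ⟨fA.comp (s.comp r), ?_⟩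
  have E1 : (fX.comp (p.comp gA)).comp (fA.comp (s.comp r))
      = fX.comp (p.comp ((gA.comp fA).comp (s.comp r))) := ContinuousMap.ext fun _ => rfl
  have E2 : (fX.comp (φ.comp gK)).comp (restr (gK ⁻¹' U))
      = fX.comp ((φ.comp (restr U)).comp r) := ContinuousMap.ext fun _ => rfl
  rw [E1, E2]
  have h1 : ((gA.comp fA).comp (s.comp r)).Homotopic (s.comp r) := by
    have := hwhisker_left eA.left_inv (s.comp r)
    rwa [ContinuousMap.id_comp] at this
  have h2 := hwhisker_right (hwhisker_right h1 p) fX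
  have h3 : p.comp (s.comp r) = (p.comp s).comp r := ContinuousMap.ext fun _ => rfl
  have h4 := hwhisker_right (hwhisker_left hs r) fX
  rw [h3] at h2
  exact h2.trans h4

theorem sect_from_model (eK : HomotopyEquiv K K') (eX : HomotopyEquiv X X')
    (eA : HomotopyEquiv A A') (φ : C(K, X)) (p : C(A, X)) (V : Set K')
    (h : Sect (eX.toFun.comp (φ.comp eK.invFun))
      (eX.toFun.comp (p.comp eA.invFun)) V) :
    Sect φ p (eK.toFun ⁻¹' V) := by
  set fX := eX.toFun
  set gX := eX.invFun
  set gK := eK.invFun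
  set fK := eK.toFun
  set gA := eA.invFun
  obtain ⟨s', hs'⟩ := h
  set r := restrMap fK V
  refine ⟨gA.comp (s'.comp r), ?_⟩
  -- step 1 : p ∘ gA ∘ s' ∘ r  ≃  gX ∘ fX ∘ p ∘ gA ∘ s' ∘ r
  have h1 : ((gX.comp fX).comp (p.comp (gA.comp (s'.comp r)))).Homotopic
      (p.comp (gA.comp (s'.comp r))) := by
    have := hwhisker_left eX.left_inv (p.comp (gA.comp (s'.comp r)))
    rwa [ContinuousMap.id_comp] at this
  have E1 : (gX.comp fX).comp (p.comp (gA.comp (s'.comp r)))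
      = gX.comp (((fX.comp (p.comp gA)).comp s').comp r) := ContinuousMap.ext fun _ => rfl
  rw [E1] at h1
  -- step 2 : whisker hs'
  have h2 : ((((fX.comp (p.comp gA)).comp s')).comp r).Homotopic
      (((fX.comp (φ.comp gK)).comp (restr V)).comp r) := by
    have h2' : ((fX.comp (p.comp gA)).comp s').Homotopic
        ((fX.comp (φ.comp gK)).comp (restr V)) := hs'
    exact hwhisker_left h2' r
  have h2'' := hwhisker_right h2 gX
  -- step 3 : gX ∘ fX ∘ φ ∘ gK ∘ ι_V ∘ r  =  (gX∘fX) ∘ (φ ∘ (gK∘fK) ∘ ι)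
  have E2 : gX.comp (((fX.comp (φ.comp gK)).comp (restr V)).comp r)
      = (gX.comp fX).comp (φ.comp ((gK.comp fK).comp (restr (fK ⁻¹' V)))) :=
    ContinuousMap.ext fun _ => rfl
  rw [E2] at h2''
  have h3 : ((gX.comp fX).comp (φ.comp ((gK.comp fK).comp (restr (fK ⁻¹' V))))).Homotopic
      (φ.comp ((gK.comp fK).comp (restr (fK ⁻¹' V)))) := by
    have := hwhisker_left eX.left_inv (φ.comp ((gK.comp fK).comp (restr (fK ⁻¹' V))))
    rwa [ContinuousMap.id_comp] at this
  have h4 : (φ.comp ((gK.comp fK).comp (restr (fK ⁻¹' V)))).Homotopic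
      (φ.comp (restr (fK ⁻¹' V))) := by
    have := hwhisker_right (hwhisker_left eK.left_inv (restr (fK ⁻¹' V))) φ
    rwa [ContinuousMap.id_comp] at this
  exact h1.symm.trans (h2''.trans (h3.trans h4))

end Transport



universe y

section Kur

variable {Y : Type y} [MetricSpace Y]

/-- A Kuratowski-type embedding `y ↦ min (dist y ·) 1` into bounded continuous functions. -/
def kur (y : Y) : BoundedContinuousFunction Y ℝ :=
  BoundedContinuousFunction.mkOfBound
    ⟨fun y' => min (dist y y') 1,
      (continuous_const.dist continuous_id).min continuous_const⟩ 1
    (fun a b => by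
      have h1 : 0 ≤ min (dist y a) 1 := le_min dist_nonneg zero_le_one
      have h2 : min (dist y a) 1 ≤ 1 := min_le_right _ _
      have h3 : 0 ≤ min (dist y b) 1 := le_min dist_nonneg zero_le_one
      have h4 : min (dist y b) 1 ≤ 1 := min_le_right _ _
      rw [Real.dist_eq, abs_sub_le_iff]
      simp only [ContinuousMap.coe_mk]
      constructor <;> linarith)

theorem kur_apply (a b : Y) : kur a b = min (dist a b) 1 := rfl

theorem min_lip {a b c : ℝ} : |min a c - min b c| ≤ |a - b| := by
  have h1 : min a c - min b c ≤ |a - b| := by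
    rcases le_total b c with h | h
    · rw [min_eq_left h]
      have := min_le_left a c
      have := le_abs_self (a - b)
      linarith
    · rw [min_eq_right h]
      have := min_le_right a c
      have := abs_nonneg (a - b)
      linarith
  have h2 : min b c - min a c ≤ |a - b| := by
    rcases le_total a c with h | h
    · rw [min_eq_left h]
      have := min_le_left b c
      have := neg_abs_le (a - b)
      linarith
    · rw [min_eq_right h]
      have := min_le_right b c
      have := abs_nonneg (a - b)
      linarith
  rw [abs_sub_le_iff]
  exact ⟨h1, h2⟩

theorem kur_dist_le (a b : Y) : dist (kur a) (kur b) ≤ dist a b := by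
  refine (BoundedContinuousFunction.dist_le dist_nonneg).2 fun x => ?_
  rw [kur_apply, kur_apply, Real.dist_eq]
  refine le_trans min_lip ?_
  have := abs_dist_sub_le a b x
  simpa [Real.dist_eq] using this

theorem kur_dist_le_one (a b : Y) : dist (kur a) (kur b) ≤ 1 := by
  refine (BoundedContinuousFunction.dist_le zero_le_one).2 fun x => ?_
  have h1 : 0 ≤ min (dist a x) 1 := le_min dist_nonneg zero_le_one
  have h2 : min (dist a x) 1 ≤ 1 := min_le_right _ _
  have h3 : 0 ≤ min (dist b x) 1 := le_min dist_nonneg zero_le_one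
  have h4 : min (dist b x) 1 ≤ 1 := min_le_right _ _
  rw [kur_apply, kur_apply, Real.dist_eq, abs_sub_le_iff]
  constructor <;> linarith

theorem le_kur_dist (a b : Y) : min (dist a b) 1 ≤ dist (kur a) (kur b) := by
  have h := BoundedContinuousFunction.dist_coe_le_dist (f := kur a) (g := kur b) b
  rw [kur_apply, kur_apply, dist_self] at h
  simpa [Real.dist_eq, abs_of_nonneg (le_min dist_nonneg zero_le_one)] using h

theorem kur_inj : Function.Injective (kur : Y → BoundedContinuousFunction Y ℝ) := by
  intro a b h
  apply eq_of_dist_eq_zero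
  by_contra hne
  have hp : 0 < dist a b := dist_nonneg.lt_of_ne (Ne.symm hne)
  have h2 := le_kur_dist a b
  rw [h, dist_self] at h2
  have := lt_min hp one_pos
  linarith

theorem kur_continuous : Continuous (kur : Y → BoundedContinuousFunction Y ℝ) := by
  rw [Metric.continuous_iff]
  intro b ε hε
  exact ⟨ε, hε, fun a hab => lt_of_le_of_lt (kur_dist_le a b) hab⟩

variable (Y)

/-- The convex hull of the image of the Kuratowski embedding. -/
def hullK : Set (BoundedContinuousFunction Y ℝ) :=
  convexHull ℝ (Set.range (kur : Y → BoundedContinuousFunction Y ℝ))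

theorem convex_hullK : Convex ℝ (hullK Y) := convex_convexHull _ _

theorem kur_mem_hullK (y : Y) : kur y ∈ hullK Y :=
  subset_convexHull _ _ ⟨y, rfl⟩

variable {Y}

/-- Wojdysławski's lemma: the image of the Kuratowski embedding is closed in its convex hull. -/
theorem mem_range_kur_of_closure (f : BoundedContinuousFunction Y ℝ)
    (hf : f ∈ hullK Y)
    (hcl : f ∈ closure (Set.range (kur : Y → BoundedContinuousFunction Y ℝ))) :
    f ∈ Set.range (kur : Y → BoundedContinuousFunction Y ℝ) := by
  rw [hullK, convexHull_eq] at hf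
  obtain ⟨ι, t, w, z, hw0, hw1, hz, hct⟩ := hf
  have hct' : ∑ i ∈ t, w i • z i = f := by
    rw [← hct, Finset.centerMass, hw1]; simp
  have hexi : ∃ i ∈ t, w i ≠ 0 := by
    by_contra h
    push_neg at h
    rw [Finset.sum_eq_zero h] at hw1
    norm_num at hw1
  obtain ⟨i₀, hi₀t, hi₀⟩ := hexi
  have hwi₀ : 0 < w i₀ := (hw0 i₀ hi₀t).lt_of_ne (Ne.symm hi₀)
  obtain ⟨x₀, hx₀⟩ := hz i₀ hi₀t
  have key : ∀ ε : ℝ, 0 < ε → dist f (kur x₀) ≤ ε * (1 + 1 / w i₀) := by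
    intro ε hε
    obtain ⟨g, hgr, hgd⟩ := Metric.mem_closure_iff.1 hcl ε hε
    obtain ⟨yy, rfl⟩ := hgr
    -- evaluate at yy
    have hev : dist (f yy) (kur yy yy) ≤ dist f (kur yy) :=
      BoundedContinuousFunction.dist_coe_le_dist yy
    have hky : kur yy yy = 0 := by simp [kur_apply]
    rw [hky, Real.dist_eq, sub_zero] at hev
    have hfyy : f yy = ∑ i ∈ t, w i * z i yy := by
      rw [← hct']
      rw [BoundedContinuousFunction.coe_sum, Finset.sum_apply]
      exact Finset.sum_congr rfl fun i _ => rfl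
    have hnonneg : ∀ i ∈ t, 0 ≤ w i * z i yy := by
      intro i hit
      obtain ⟨xi, hxi⟩ := hz i hit
      have : 0 ≤ z i yy := by
        rw [← hxi, kur_apply]
        exact le_min dist_nonneg zero_le_one
      exact mul_nonneg (hw0 i hit) this
    have hterm : w i₀ * z i₀ yy ≤ f yy := by
      rw [hfyy]
      exact Finset.single_le_sum hnonneg hi₀t
    have hfabs : f yy ≤ ε := by
      have : 0 ≤ f yy := by rw [hfyy]; exact Finset.sum_nonneg hnonneg
      rw [abs_of_nonneg this] at hev
      exact le_of_lt (lt_of_le_of_lt hev hgd)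
    have hzi : z i₀ yy = min (dist x₀ yy) 1 := by rw [← hx₀, kur_apply]
    have hmin : min (dist x₀ yy) 1 ≤ ε / w i₀ := by
      rw [le_div_iff₀ hwi₀, mul_comm]
      calc w i₀ * min (dist x₀ yy) 1 = w i₀ * z i₀ yy := by rw [hzi]
      _ ≤ f yy := hterm
      _ ≤ ε := hfabs
    have hkk : dist (kur x₀) (kur yy) ≤ ε / w i₀ :=
      le_trans (le_min (kur_dist_le x₀ yy) (kur_dist_le_one x₀ yy)) hmin
    calc dist f (kur x₀) ≤ dist f (kur yy) + dist (kur yy) (kur x₀) := dist_triangle _ _ _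
      _ ≤ ε + ε / w i₀ := by
          have := dist_comm (kur yy) (kur x₀)
          exact add_le_add (le_of_lt hgd) (by rw [dist_comm]; exact hkk)
      _ = ε * (1 + 1 / w i₀) := by ring
  have hd0 : dist f (kur x₀) ≤ 0 := by
    refine le_of_forall_pos_le_add fun η hη => ?_
    have hpos : 0 < 1 + 1 / w i₀ := by positivity
    have := key (η / (1 + 1 / w i₀)) (by positivity)
    rw [div_mul_cancel₀ _ (ne_of_gt hpos)] at this
    linarith
  exact ⟨x₀, (eq_of_dist_eq_zero (le_antisymm hd0 dist_nonneg)).symm⟩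

end Kur

/-- The structure of an ANR `Y` : a "relatively open" neighborhood `V` of the Kuratowski copy of
`Y` inside the convex hull, together with a retraction `F : V → Y`. -/
structure Pack (Y : Type y) [MetricSpace Y] where
  V : Set (BoundedContinuousFunction Y ℝ)
  hVsub : V ⊆ hullK Y
  hrange : ∀ y : Y, kur y ∈ V
  hOpen : ∀ v ∈ V, ∃ γ : ℝ, 0 < γ ∧ ∀ c ∈ hullK Y, dist c v ≤ γ → c ∈ V
  F : C({c : BoundedContinuousFunction Y ℝ // c ∈ V}, Y)
  hFk : ∀ y : Y, F ⟨kur y, hrange y⟩ = y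

theorem exists_pack (Y : Type y) [MetricSpace Y]
    (hY : ∀ (M : Type y) [TopologicalSpace M] [TopologicalSpace.MetrizableSpace M]
      (A : Set M), IsClosed A → ∀ f : C(A, Y),
        ∃ (U : Set M) (hAU : A ⊆ U), IsOpen U ∧
          ∃ F : C(U, Y), ∀ (a : M) (ha : a ∈ A), F ⟨a, hAU ha⟩ = f ⟨a, ha⟩) :
    Nonempty (Pack Y) := by
  classical
  set Γ : Set (hullK Y) :=
    {c : hullK Y | (c : BoundedContinuousFunction Y ℝ) ∈
      Set.range (kur : Y → BoundedContinuousFunction Y ℝ)} with hΓdef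
  have hΓeq : Γ = Subtype.val ⁻¹'
      closure (Set.range (kur : Y → BoundedContinuousFunction Y ℝ)) := by
    ext c
    constructor
    · exact fun h => subset_closure h
    · exact fun h => mem_range_kur_of_closure _ c.2 h
  have hΓ : IsClosed Γ := by
    rw [hΓeq]; exact isClosed_closure.preimage continuous_subtype_val
  have hexists : ∀ c : Γ, ∃ yy : Y,
      kur yy = ((c : hullK Y) : BoundedContinuousFunction Y ℝ) := fun c => c.2
  set finv : Γ → Y := fun c => (hexists c).choose with hfinv
  have hspec : ∀ c : Γ, kur (finv c) = ((c : hullK Y) : BoundedContinuousFunction Y ℝ) :=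
    fun c => (hexists c).choose_spec
  have hfinvcont : Continuous finv := by
    rw [Metric.continuous_iff]
    intro b ε hε
    refine ⟨min ε 1, by positivity, fun a hab => ?_⟩
    have hdd : dist ((a : hullK Y) : BoundedContinuousFunction Y ℝ)
        ((b : hullK Y) : BoundedContinuousFunction Y ℝ) < min ε 1 := by
      rw [Subtype.dist_eq, Subtype.dist_eq] at hab
      exact hab
    have h1 := le_kur_dist (finv a) (finv b)
    rw [hspec a, hspec b] at h1
    rcases le_total (dist (finv a) (finv b)) 1 with h | h
    · rw [min_eq_left h] at h1
      exact lt_of_le_of_lt h1 (lt_of_lt_of_le hdd (min_le_left _ _))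
    · rw [min_eq_right h] at h1
      have := lt_of_le_of_lt h1 hdd
      have := min_le_right ε 1
      linarith
  obtain ⟨U, hAU, hUopen, F, hF⟩ := hY (hullK Y) Γ hΓ ⟨finv, hfinvcont⟩
  have memhull : ∀ c, c ∈ (Subtype.val '' U : Set (BoundedContinuousFunction Y ℝ)) →
      c ∈ hullK Y := by
    rintro c ⟨m, _, rfl⟩; exact m.2
  have memU : ∀ c (hc : c ∈ (Subtype.val '' U : Set (BoundedContinuousFunction Y ℝ))),
      (⟨c, memhull c hc⟩ : hullK Y) ∈ U := by
    rintro c ⟨m, hm, rfl⟩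
    simpa using hm
  have hrange' : ∀ yy : Y, kur yy ∈ (Subtype.val '' U : Set (BoundedContinuousFunction Y ℝ)) :=
    fun yy => ⟨⟨kur yy, kur_mem_hullK Y yy⟩, hAU ⟨yy, rfl⟩, rfl⟩
  refine ⟨{ V := Subtype.val '' U
            hVsub := memhull
            hrange := hrange'
            hOpen := ?_
            F := ⟨fun c => F ⟨⟨c.1, memhull _ c.2⟩, memU _ c.2⟩,
              F.continuous.comp ((continuous_subtype_val.subtype_mk _).subtype_mk _)⟩
            hFk := ?_ }⟩
  · rintro v ⟨m, hmU, rfl⟩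
    obtain ⟨ε, hε, hball⟩ := Metric.isOpen_iff.1 hUopen m hmU
    refine ⟨ε / 2, by positivity, fun c hc hdist => ?_⟩
    have hmem : (⟨c, hc⟩ : hullK Y) ∈ Metric.ball m ε := by
      rw [Metric.mem_ball, Subtype.dist_eq]
      calc dist c (m : BoundedContinuousFunction Y ℝ) ≤ ε / 2 := hdist
        _ < ε := by linarith
    exact ⟨⟨c, hc⟩, hball hmem, rfl⟩
  · intro yy
    have ha : (⟨kur yy, kur_mem_hullK Y yy⟩ : hullK Y) ∈ Γ := ⟨yy, rfl⟩
    have h1 := hF ⟨kur yy, kur_mem_hullK Y yy⟩ ha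
    show F ⟨⟨kur yy, kur_mem_hullK Y yy⟩, memU _ (hrange' yy)⟩ = yy
    rw [show (⟨⟨kur yy, kur_mem_hullK Y yy⟩, memU _ (hrange' yy)⟩ : U) =
      ⟨⟨kur yy, kur_mem_hullK Y yy⟩, hAU ha⟩ from rfl, h1]
    apply kur_inj
    exact hspec _


end S19


section Core

open BoundedContinuousFunction

theorem dist_centerMass_le {E : Type*} [NormedAddCommGroup E] [NormedSpace ℝ E] {ι : Type*}
    (T : Finset ι) (c : ι → ℝ) (v : ι → E) (w : E) (ε : ℝ)
    (hc0 : ∀ i ∈ T, 0 ≤ c i) (hc1 : ∑ i ∈ T, c i = 1)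
    (hv : ∀ i ∈ T, c i ≠ 0 → dist (v i) w ≤ ε) :
    dist (∑ i ∈ T, c i • v i) w ≤ ε := by
  have hrw : ∑ i ∈ T, c i • v i - w = ∑ i ∈ T, c i • (v i - w) := by
    simp_rw [smul_sub]
    rw [Finset.sum_sub_distrib, ← Finset.sum_smul, hc1, one_smul]
  rw [dist_eq_norm, hrw]
  refine le_trans (norm_sum_le _ _) ?_
  have hterm : ∀ i ∈ T, ‖c i • (v i - w)‖ ≤ c i * ε := by
    intro i hi
    rw [norm_smul, Real.norm_eq_abs, abs_of_nonneg (hc0 i hi)]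
    rcases eq_or_ne (c i) 0 with h | h
    · simp [h]
    · have hd := hv i hi h
      rw [dist_eq_norm] at hd
      exact mul_le_mul_of_nonneg_left hd (hc0 i hi)
  refine le_trans (Finset.sum_le_sum hterm) ?_
  rw [← Finset.sum_mul, hc1, one_mul]

theorem dist_segment_le {E : Type*} [NormedAddCommGroup E] [NormedSpace ℝ E]
    {a b w : E} {t γ : ℝ} (ht0 : 0 ≤ t) (ht1 : t ≤ 1)
    (ha : dist a w ≤ γ) (hb : dist b w ≤ γ) :
    dist ((1 - t) • a + t • b) w ≤ γ := by
  have hrw : (1 - t) • a + t • b - w = (1 - t) • (a - w) + t • (b - w) := by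
    module
  rw [dist_eq_norm, hrw]
  rw [dist_eq_norm] at ha hb
  calc ‖(1 - t) • (a - w) + t • (b - w)‖
      ≤ ‖(1 - t) • (a - w)‖ + ‖t • (b - w)‖ := norm_add_le _ _
    _ ≤ (1 - t) * γ + t * γ := by
        rw [norm_smul, norm_smul, Real.norm_eq_abs, Real.norm_eq_abs,
          abs_of_nonneg (by linarith : (0:ℝ) ≤ 1 - t), abs_of_nonneg ht0]
        have hγ : 0 ≤ γ := le_trans (norm_nonneg _) ha
        exact add_le_add (mul_le_mul_of_nonneg_left ha (by linarith))
          (mul_le_mul_of_nonneg_left hb ht0)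
    _ = γ := by ring

theorem pack_unif {Y : Type*} [MetricSpace Y] (P : S19.Pack Y)
    (Q : Set (BoundedContinuousFunction Y ℝ)) (hQ : IsCompact Q) (hQV : Q ⊆ P.V) :
    ∃ γ : ℝ, 0 < γ ∧ ∀ c ∈ S19.hullK Y, ∀ q ∈ Q, dist c q ≤ γ → c ∈ P.V := by
  rcases Q.eq_empty_or_nonempty with rfl | hne
  · exact ⟨1, one_pos, by simp⟩
  have hch : ∀ v : Q, ∃ γ : ℝ, 0 < γ ∧
      ∀ c ∈ S19.hullK Y, dist c (v : BoundedContinuousFunction Y ℝ) ≤ γ → c ∈ P.V :=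
    fun v => P.hOpen v (hQV v.2)
  choose γ hγpos hγ using hch
  have hcover : Q ⊆ ⋃ v : Q, Metric.ball (v : BoundedContinuousFunction Y ℝ) (γ v / 2) := by
    intro q hq
    exact mem_iUnion.2 ⟨⟨q, hq⟩, by
      rw [Metric.mem_ball, dist_self]
      have := hγpos ⟨q, hq⟩
      positivity⟩
  obtain ⟨sfin, hsfin⟩ := hQ.elim_finite_subcover
    (fun v : Q => Metric.ball (v : BoundedContinuousFunction Y ℝ) (γ v / 2))
    (fun v => Metric.isOpen_ball) hcover
  obtain ⟨q₀, hq₀⟩ := hne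
  have hsne : sfin.Nonempty := by
    have := hsfin hq₀
    rw [mem_iUnion₂] at this
    obtain ⟨v, hv, -⟩ := this
    exact ⟨v, hv⟩
  refine ⟨sfin.inf' hsne (fun v => γ v / 2), ?_, ?_⟩
  · rw [Finset.lt_inf'_iff]
    intro v _
    have := hγpos v
    positivity
  · intro c hc q hq hdist
    have := hsfin hq
    rw [mem_iUnion₂] at this
    obtain ⟨v, hv, hqv⟩ := this
    rw [Metric.mem_ball] at hqv
    have hinf : sfin.inf' hsne (fun v => γ v / 2) ≤ γ v / 2 := Finset.inf'_le _ hv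
    refine hγ v c hc ?_
    calc dist c (v : BoundedContinuousFunction Y ℝ)
        ≤ dist c q + dist q (v : BoundedContinuousFunction Y ℝ) := dist_triangle _ _ _
      _ ≤ γ v / 2 + γ v / 2 := add_le_add (le_trans hdist hinf) (le_of_lt hqv)
      _ = γ v := by ring

namespace S19

open unitInterval

set_option maxHeartbeats 2000000 in
theorem core {K' : Type u1} {X' : Type u2} {A' : Type u3}
    [MetricSpace K'] [MetricSpace X'] [MetricSpace A']
    (PX : Pack X') (PA : Pack A') (φ' : C(K', X')) (p' : C(A', X'))
    (Z : Set K') (hZ : Sect φ' p' Z) :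
    ∃ O : Set K', IsOpen O ∧ Z ⊆ O ∧ Sect φ' p' O := by
  classical
  obtain ⟨s, hs⟩ := hZ
  obtain ⟨G⟩ := hs
  -- the choice of radii for every point of Z
  have main_choice : ∀ z : Z, ∃ γ ε δ : ℝ, 0 < γ ∧ 0 < ε ∧ ε ≤ γ ∧ 0 < δ ∧
      (∀ t : unitInterval, ∀ c ∈ hullK X', dist c (kur (G (t, z))) ≤ γ → c ∈ PX.V) ∧
      (∀ c ∈ hullK A', dist c (kur (s z)) ≤ ε → c ∈ PA.V) ∧
      (∀ c, ∀ hc : c ∈ PA.V, dist c (kur (s z)) ≤ ε →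
        dist (p' (PA.F ⟨c, hc⟩)) (p' (s z)) ≤ γ) ∧
      (∀ x : K', dist x (z : K') ≤ 2 * δ → dist (φ' x) (φ' (z : K')) ≤ γ) ∧
      (∀ z' : Z, dist (z' : K') (z : K') ≤ 2 * δ → dist (s z') (s z) ≤ ε) ∧
      (∀ z' : Z, dist (z' : K') (z : K') ≤ 2 * δ →
        ∀ t : unitInterval, dist (kur (G (t, z'))) (kur (G (t, z))) ≤ ε) := by
    intro z
    -- γ stage
    have hQcomp : IsCompact ((fun t : unitInterval => kur (G (t, z))) '' univ) :=
      isCompact_univ.image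
        (kur_continuous.comp (G.continuous.comp (continuous_id.prodMk continuous_const)))
    have hQV : ((fun t : unitInterval => kur (G (t, z))) '' univ) ⊆ PX.V := by
      rintro _ ⟨t, -, rfl⟩
      exact PX.hrange _
    obtain ⟨γ, hγ0, hγ⟩ := pack_unif PX _ hQcomp hQV
    -- ε stage
    obtain ⟨γA, hγA0, hγA⟩ := PA.hOpen (kur (s z)) (PA.hrange _)
    have hcontu : Continuous fun c : {c // c ∈ PA.V} => p' (PA.F c) :=
      p'.continuous.comp PA.F.continuous
    obtain ⟨δA, hδA0, hδA⟩ := Metric.continuous_iff.1 hcontu ⟨kur (s z), PA.hrange (s z)⟩ γ hγ0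
    set ε := min (min γ (δA / 2)) γA with hεdef
    have hε0 : 0 < ε := by positivity
    have hεγ : ε ≤ γ := le_trans (min_le_left _ _) (min_le_left _ _)
    -- δ stage
    obtain ⟨δ1, hδ10, hδ1⟩ := Metric.continuous_iff.1 φ'.continuous (z : K') γ hγ0
    obtain ⟨δ2, hδ20, hδ2⟩ := Metric.continuous_iff.1 s.continuous z ε hε0
    -- tube lemma for the homotopy
    have hNopen : IsOpen {w : unitInterval × Z |
        dist (kur (G w)) (kur (G (w.1, z))) < ε} := by
      apply isOpen_lt _ continuous_const
      exact Continuous.dist (kur_continuous.comp G.continuous)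
        (kur_continuous.comp (G.continuous.comp (continuous_fst.prodMk continuous_const)))
    have hsub : (univ : Set unitInterval) ×ˢ ({z} : Set Z) ⊆
        {w : unitInterval × Z | dist (kur (G w)) (kur (G (w.1, z))) < ε} := by
      rintro ⟨t, z'⟩ ⟨-, hz'⟩
      simp only [mem_singleton_iff] at hz'
      subst hz'
      simp [hε0]
    obtain ⟨u, v, -, hvopen, hu, hzv, huv⟩ :=
      generalized_tube_lemma isCompact_univ isCompact_singleton hNopen hsub
    obtain ⟨rv, hrv0, hrv⟩ := Metric.isOpen_iff.1 hvopen z (hzv rfl)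
    set δ := min (min (δ1 / 4) (δ2 / 4)) (rv / 4) with hδdef
    have hδ0 : 0 < δ := by positivity
    refine ⟨γ, ε, δ, hγ0, hε0, hεγ, hδ0, ?_, ?_, ?_, ?_, ?_, ?_⟩
    · intro t c hc hdist
      exact hγ c hc _ ⟨t, mem_univ t, rfl⟩ hdist
    · intro c hc hdist
      exact hγA c hc (le_trans hdist (min_le_right _ _))
    · intro c hc hdist
      have h1 : dist (⟨c, hc⟩ : {c // c ∈ PA.V}) ⟨kur (s z), PA.hrange (s z)⟩ < δA := by
        rw [Subtype.dist_eq]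
        calc dist c (kur (s z)) ≤ ε := hdist
          _ ≤ δA / 2 := le_trans (min_le_left _ _) (min_le_right _ _)
          _ < δA := by linarith
      have h2 := hδA _ h1
      rw [PA.hFk] at h2
      exact le_of_lt h2
    · intro x hx
      refine le_of_lt (hδ1 x ?_)
      calc dist x (z : K') ≤ 2 * δ := hx
        _ ≤ 2 * (δ1 / 4) := by
            have : δ ≤ δ1 / 4 := le_trans (min_le_left _ _) (min_le_left _ _)
            linarith
        _ < δ1 := by linarith
    · intro z' hz'
      refine le_of_lt (hδ2 z' ?_)
      rw [Subtype.dist_eq]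
      calc dist (z' : K') (z : K') ≤ 2 * δ := hz'
        _ ≤ 2 * (δ2 / 4) := by
            have : δ ≤ δ2 / 4 := le_trans (min_le_left _ _) (min_le_right _ _)
            linarith
        _ < δ2 := by linarith
    · intro z' hz' t
      have hz'v : z' ∈ v := by
        apply hrv
        rw [Metric.mem_ball, Subtype.dist_eq]
        calc dist (z' : K') (z : K') ≤ 2 * δ := hz'
          _ ≤ 2 * (rv / 4) := by
              have : δ ≤ rv / 4 := min_le_right _ _
              linarith
          _ < rv := by linarith
      have := huv (show (t, z') ∈ u ×ˢ v from ⟨hu (mem_univ t), hz'v⟩)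
      exact le_of_lt this
  choose γf εf δf hγ0 hε0 hεγ hδ0 hP1 hP2 hP3 hP4 hP5 hP6 using main_choice
  -- the open set
  set O : Set K' := ⋃ z : Z, Metric.ball (z : K') (δf z) with hOdef
  have hOopen : IsOpen O := isOpen_iUnion fun _ => Metric.isOpen_ball
  have hZO : Z ⊆ O := fun x hx =>
    mem_iUnion.2 ⟨⟨x, hx⟩, Metric.mem_ball_self (hδ0 _)⟩
  -- partition of unity
  set W : Z → Set O := fun z => Subtype.val ⁻¹' (Metric.ball (z : K') (δf z)) with hWdef
  have hWopen : ∀ z, IsOpen (W z) := fun z => Metric.isOpen_ball.preimage continuous_subtype_val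
  have hWcov : (univ : Set O) ⊆ ⋃ z, W z := by
    rintro ⟨x, hx⟩ -
    obtain ⟨z, hz⟩ := mem_iUnion.1 hx
    exact mem_iUnion.2 ⟨z, hz⟩
  obtain ⟨ψ, hψ⟩ := PartitionOfUnity.exists_isSubordinate isClosed_univ W hWopen hWcov
  have hfin : ∀ x : O, {i : Z | ψ i x ≠ 0}.Finite := by
    intro x
    have := ψ.locallyFinite.point_finite x
    simpa [Function.support] using this
  set T : (x : O) → Finset Z := fun x => (hfin x).toFinset with hTdef
  have hTmem : ∀ (x : O) (i : Z), i ∈ T x ↔ ψ i x ≠ 0 := fun x i => (hfin x).mem_toFinset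
  -- the two smoothed maps
  set vA : Z → (A' →ᵇ ℝ) := fun z => kur (s z) with hvAdef
  set kG : Z → (unitInterval →ᵇ (X' →ᵇ ℝ)) := fun z =>
    BoundedContinuousFunction.mkOfBound
      ⟨fun t => kur (G (t, z)),
        kur_continuous.comp (G.continuous.comp (continuous_id.prodMk continuous_const))⟩ 1
      (fun t t' => kur_dist_le_one _ _) with hkGdef
  have hkGapply : ∀ (z : Z) (t : unitInterval), kG z t = kur (G (t, z)) := fun _ _ => rfl
  set W1 : O → (A' →ᵇ ℝ) := fun x => ∑ᶠ i, ψ i x • vA i with hW1def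
  set W2 : O → (unitInterval →ᵇ (X' →ᵇ ℝ)) := fun x => ∑ᶠ i, ψ i x • kG i with hW2def
  have hW1cont : Continuous W1 :=
    ψ.continuous_finsum_smul (g := fun i _ => vA i) (fun i x _ => continuousAt_const)
  have hW2cont : Continuous W2 :=
    ψ.continuous_finsum_smul (g := fun i _ => kG i) (fun i x _ => continuousAt_const)
  have hW1eq : ∀ x : O, W1 x = ∑ i ∈ T x, ψ i x • vA i := by
    intro x
    refine finsum_eq_sum_of_support_subset _ ?_
    intro i hi
    rw [Function.mem_support] at hi
    refine (hTmem x i).2 ?_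
    intro h0
    exact hi (show ψ i x • vA i = 0 by rw [h0]; exact zero_smul ℝ (vA i))
  have hW2eq : ∀ x : O, W2 x = ∑ i ∈ T x, ψ i x • kG i := by
    intro x
    refine finsum_eq_sum_of_support_subset _ ?_
    intro i hi
    rw [Function.mem_support] at hi
    refine (hTmem x i).2 ?_
    intro h0
    exact hi (show ψ i x • kG i = 0 by rw [h0]; exact zero_smul ℝ (kG i))
  have hcoef1 : ∀ x : O, ∑ i ∈ T x, ψ i x = 1 := by
    intro x
    have h := ψ.sum_eq_one (mem_univ x)
    rw [finsum_eq_sum_of_support_subset _ ?_] at h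
    · exact h
    · intro i hi
      rw [Function.mem_support] at hi
      exact (hTmem x i).2 hi
  have hW2eval : ∀ (x : O) (t : unitInterval),
      (W2 x) t = ∑ i ∈ T x, ψ i x • kur (G (t, i)) := by
    intro x t
    rw [hW2eq x]
    rw [BoundedContinuousFunction.coe_sum, Finset.sum_apply]
    refine Finset.sum_congr rfl fun i _ => ?_
    rw [BoundedContinuousFunction.coe_smul]
    rfl
  have hW1hull : ∀ x : O, W1 x ∈ hullK A' := by
    intro x
    rw [hW1eq x]
    exact (convex_hullK A').sum_mem (fun i _ => ψ.nonneg i x) (hcoef1 x)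
      (fun i _ => kur_mem_hullK _ _)
  have hW2hull : ∀ (x : O) (t : unitInterval), (W2 x) t ∈ hullK X' := by
    intro x t
    rw [hW2eval x t]
    exact (convex_hullK X').sum_mem (fun i _ => ψ.nonneg i x) (hcoef1 x)
      (fun i _ => kur_mem_hullK _ _)
  -- the master estimate
  have master : ∀ x : O, ∃ j : Z,
      dist (W1 x) (kur (s j)) ≤ εf j ∧
      (∀ t : unitInterval, dist ((W2 x) t) (kur (G (t, j))) ≤ εf j) ∧
      dist (x : K') (j : K') ≤ 2 * δf j := by
    intro x
    have hTne : (T x).Nonempty := by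
      by_contra h
      rw [Finset.not_nonempty_iff_eq_empty] at h
      have := hcoef1 x
      rw [h, Finset.sum_empty] at this
      norm_num at this
    obtain ⟨j, hjT, hjmax⟩ := Finset.exists_max_image (T x) (fun i => δf i) hTne
    have hball : ∀ i ∈ T x, dist (x : K') (i : K') < δf i := by
      intro i hi
      have hi' : ψ i x ≠ 0 := (hTmem x i).1 hi
      have hsupp : x ∈ tsupport (ψ i) := subset_closure (by
        rw [Function.mem_support]; exact hi')
      have := hψ i hsupp
      simpa [hWdef, Metric.mem_ball] using this
    have hij : ∀ i ∈ T x, dist (i : K') (j : K') ≤ 2 * δf j := by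
      intro i hi
      have h1 := hball i hi
      have h2 := hball j hjT
      have h3 := hjmax i hi
      calc dist (i : K') (j : K') ≤ dist (i : K') (x : K') + dist (x : K') (j : K') :=
            dist_triangle _ _ _
        _ ≤ δf i + δf j := by
            rw [dist_comm]
            exact add_le_add (le_of_lt h1) (le_of_lt h2)
        _ ≤ 2 * δf j := by linarith
    refine ⟨j, ?_, ?_, ?_⟩
    · rw [hW1eq x]
      refine dist_centerMass_le (T x) _ _ _ _ (fun i _ => ψ.nonneg i x) (hcoef1 x) ?_
      intro i hi _
      exact le_trans (kur_dist_le _ _) (hP5 j i (hij i hi))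
    · intro t
      rw [hW2eval x t]
      refine dist_centerMass_le (T x) _ _ _ _ (fun i _ => ψ.nonneg i x) (hcoef1 x) ?_
      intro i hi _
      exact hP6 j i (hij i hi) t
    · have := hball j hjT
      have := hδ0 j
      linarith
  -- memberships in V
  have hW1V : ∀ x : O, W1 x ∈ PA.V := by
    intro x
    obtain ⟨j, hA, -, -⟩ := master x
    exact hP2 j (W1 x) (hW1hull x) hA
  have hW2V : ∀ (x : O) (t : unitInterval), (W2 x) t ∈ PX.V := by
    intro x t
    obtain ⟨j, -, hB, -⟩ := master x
    exact hP1 j t _ (hW2hull x t) (le_trans (hB t) (hεγ j))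
  -- the candidate section
  set stilde : C(O, A') := ⟨fun x => PA.F ⟨W1 x, hW1V x⟩,
    PA.F.continuous.comp (hW1cont.subtype_mk _)⟩ with hstildedef
  -- segment memberships
  have hseg2 : ∀ (x : O) (t : unitInterval),
      ((1 - (t : ℝ)) • kur (p' (stilde x)) + (t : ℝ) • (W2 x) 0) ∈ PX.V := by
    intro x t
    obtain ⟨j, hA, hB, -⟩ := master x
    have he2 : dist ((W2 x) 0) (kur (G (0, j))) ≤ γf j := le_trans (hB 0) (hεγ j)
    have he1 : dist (kur (p' (stilde x))) (kur (G (0, j))) ≤ γf j := by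
      have hG0 : G (0, j) = p' (s j) := by
        have := G.apply_zero j
        simpa using this
      rw [hG0]
      exact le_trans (kur_dist_le _ _) (hP3 j (W1 x) (hW1V x) hA)
    have hmemhull : ((1 - (t : ℝ)) • kur (p' (stilde x)) + (t : ℝ) • (W2 x) 0) ∈ hullK X' :=
      (convex_hullK X') (kur_mem_hullK _ _) (hW2hull x 0)
        (by have := t.2.2; linarith) t.2.1 (by ring)
    exact hP1 j 0 _ hmemhull (dist_segment_le t.2.1 t.2.2 he1 he2)
  have hseg3 : ∀ (x : O) (t : unitInterval),
      ((1 - (t : ℝ)) • (W2 x) 1 + (t : ℝ) • kur (φ' (x : K'))) ∈ PX.V := by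
    intro x t
    obtain ⟨j, -, hB, hC⟩ := master x
    have hG1 : G (1, j) = φ' (j : K') := by
      have := G.apply_one j
      simpa [restr] using this
    have he3 : dist ((W2 x) 1) (kur (G (1, j))) ≤ γf j := le_trans (hB 1) (hεγ j)
    have he4 : dist (kur (φ' (x : K'))) (kur (G (1, j))) ≤ γf j := by
      rw [hG1]
      exact le_trans (kur_dist_le _ _) (hP4 j (x : K') hC)
    have hmemhull : ((1 - (t : ℝ)) • (W2 x) 1 + (t : ℝ) • kur (φ' (x : K'))) ∈ hullK X' :=
      (convex_hullK X') (hW2hull x 1) (kur_mem_hullK _ _)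
        (by have := t.2.2; linarith) t.2.1 (by ring)
    exact hP1 j 1 _ hmemhull (dist_segment_le t.2.1 t.2.2 he3 he4)
  -- intermediate maps
  have contW2eval : Continuous fun q : unitInterval × O => (W2 q.2) q.1 := by
    have h1 : Continuous fun q : unitInterval × O => ((W2 q.2), q.1) :=
      (hW2cont.comp continuous_snd).prodMk continuous_fst
    exact continuous_eval.comp h1
  set M1 : C(O, X') := ⟨fun x => PX.F ⟨(W2 x) 0, hW2V x 0⟩,
    PX.F.continuous.comp ((continuous_eval_const (0 : unitInterval)|>.comp
      hW2cont).subtype_mk _)⟩ with hM1def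
  set M2 : C(O, X') := ⟨fun x => PX.F ⟨(W2 x) 1, hW2V x 1⟩,
    PX.F.continuous.comp ((continuous_eval_const (1 : unitInterval)|>.comp
      hW2cont).subtype_mk _)⟩ with hM2def
  -- homotopy 1 : M1 ≃ M2
  have homotopy1 : M1.Homotopy M2 :=
    { toContinuousMap := ⟨fun q => PX.F ⟨(W2 q.2) q.1, hW2V q.2 q.1⟩,
        PX.F.continuous.comp (contW2eval.subtype_mk _)⟩
      map_zero_left := fun x => rfl
      map_one_left := fun x => rfl }
  -- homotopy 2 : p' ∘ stilde ≃ M1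
  have cont2 : Continuous fun q : unitInterval × O =>
      ((1 - (q.1 : ℝ)) • kur (p' (stilde q.2)) + (q.1 : ℝ) • (W2 q.2) 0) := by
    have hc1 : Continuous fun q : unitInterval × O => (q.1 : ℝ) :=
      continuous_subtype_val.comp continuous_fst
    have hc2 : Continuous fun q : unitInterval × O => kur (p' (stilde q.2)) :=
      kur_continuous.comp (p'.continuous.comp (stilde.continuous.comp continuous_snd))
    have hc3 : Continuous fun q : unitInterval × O => (W2 q.2) 0 :=
      (continuous_eval_const (0 : unitInterval)).comp (hW2cont.comp continuous_snd)
    exact ((continuous_const.sub hc1).smul hc2).add (hc1.smul hc3)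
  have homotopy2 : (p'.comp stilde).Homotopy M1 :=
    { toContinuousMap := ⟨fun q => PX.F ⟨(1 - (q.1 : ℝ)) • kur (p' (stilde q.2)) +
        (q.1 : ℝ) • (W2 q.2) 0, hseg2 q.2 q.1⟩,
        PX.F.continuous.comp (cont2.subtype_mk _)⟩
      map_zero_left := fun x => by
        simp only [ContinuousMap.coe_mk]
        have hval : (1 - ((0 : unitInterval) : ℝ)) • kur (p' (stilde x)) +
            ((0 : unitInterval) : ℝ) • (W2 x) 0 = kur (p' (stilde x)) := by
          rw [show ((0 : unitInterval) : ℝ) = 0 from rfl, sub_zero, one_smul, zero_smul, add_zero]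
        calc PX.F ⟨_, hseg2 x 0⟩ = PX.F ⟨kur (p' (stilde x)), PX.hrange _⟩ :=
              congrArg PX.F (Subtype.ext hval)
          _ = p' (stilde x) := PX.hFk _
          _ = (p'.comp stilde) x := rfl
      map_one_left := fun x => by
        simp only [ContinuousMap.coe_mk]
        have hval : (1 - ((1 : unitInterval) : ℝ)) • kur (p' (stilde x)) +
            ((1 : unitInterval) : ℝ) • (W2 x) 0 = (W2 x) 0 := by
          rw [show ((1 : unitInterval) : ℝ) = 1 from rfl, sub_self, zero_smul, one_smul, zero_add]
        calc PX.F ⟨_, hseg2 x 1⟩ = PX.F ⟨(W2 x) 0, hW2V x 0⟩ :=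
              congrArg PX.F (Subtype.ext hval)
          _ = M1 x := rfl }
  -- homotopy 3 : M2 ≃ φ' ∘ restr O
  have cont3 : Continuous fun q : unitInterval × O =>
      ((1 - (q.1 : ℝ)) • (W2 q.2) 1 + (q.1 : ℝ) • kur (φ' ((q.2 : O) : K'))) := by
    have hc1 : Continuous fun q : unitInterval × O => (q.1 : ℝ) :=
      continuous_subtype_val.comp continuous_fst
    have hc2 : Continuous fun q : unitInterval × O => (W2 q.2) 1 :=
      (continuous_eval_const (1 : unitInterval)).comp (hW2cont.comp continuous_snd)
    have hc3 : Continuous fun q : unitInterval × O => kur (φ' ((q.2 : O) : K')) :=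
      kur_continuous.comp (φ'.continuous.comp (continuous_subtype_val.comp continuous_snd))
    exact ((continuous_const.sub hc1).smul hc2).add (hc1.smul hc3)
  have homotopy3 : M2.Homotopy (φ'.comp (restr O)) :=
    { toContinuousMap := ⟨fun q => PX.F ⟨(1 - (q.1 : ℝ)) • (W2 q.2) 1 +
        (q.1 : ℝ) • kur (φ' ((q.2 : O) : K')), hseg3 q.2 q.1⟩,
        PX.F.continuous.comp (cont3.subtype_mk _)⟩
      map_zero_left := fun x => by
        simp only [ContinuousMap.coe_mk]
        have hval : (1 - ((0 : unitInterval) : ℝ)) • (W2 x) 1 +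
            ((0 : unitInterval) : ℝ) • kur (φ' ((x : O) : K')) = (W2 x) 1 := by
          rw [show ((0 : unitInterval) : ℝ) = 0 from rfl, sub_zero, one_smul, zero_smul, add_zero]
        calc PX.F ⟨_, hseg3 x 0⟩ = PX.F ⟨(W2 x) 1, hW2V x 1⟩ :=
              congrArg PX.F (Subtype.ext hval)
          _ = M2 x := rfl
      map_one_left := fun x => by
        simp only [ContinuousMap.coe_mk]
        have hval : (1 - ((1 : unitInterval) : ℝ)) • (W2 x) 1 +
            ((1 : unitInterval) : ℝ) • kur (φ' ((x : O) : K')) = kur (φ' ((x : O) : K')) := by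
          rw [show ((1 : unitInterval) : ℝ) = 1 from rfl, sub_self, zero_smul, one_smul, zero_add]
        calc PX.F ⟨_, hseg3 x 1⟩ = PX.F ⟨kur (φ' ((x : O) : K')), PX.hrange _⟩ :=
              congrArg PX.F (Subtype.ext hval)
          _ = φ' ((x : O) : K') := PX.hFk _
          _ = (φ'.comp (restr O)) x := rfl }
  exact ⟨O, hOopen, hZO, stilde, ⟨(homotopy2.trans homotopy1).trans homotopy3⟩⟩

end S19

end Core



theorem stmt19 {K : Type u} {X : Type v} {A : Type w} [TopologicalSpace K] [TopologicalSpace X]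
    [TopologicalSpace A]
    (hK : HasANRHomotopyType K) (hX : HasANRHomotopyType X) (hA : HasANRHomotopyType A)
    (φ : C(K, X)) (p : C(A, X)) :
    relSecat φ p = grelSecat φ p := by
  classical
  obtain ⟨K', iK, hKA, ⟨eK⟩⟩ := hK
  obtain ⟨X', iX, hXA, ⟨eX⟩⟩ := hX
  obtain ⟨A', iA, hAA, ⟨eA⟩⟩ := hA
  letI := iK; letI := iX; letI := iA
  haveI : TopologicalSpace.MetrizableSpace K' := hKA.1
  haveI : TopologicalSpace.MetrizableSpace X' := hXA.1
  haveI : TopologicalSpace.MetrizableSpace A' := hAA.1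
  letI mK : MetricSpace K' := TopologicalSpace.metrizableSpaceMetric K'
  letI mX : MetricSpace X' := TopologicalSpace.metrizableSpaceMetric X'
  letI mA : MetricSpace A' := TopologicalSpace.metrizableSpaceMetric A'
  obtain ⟨PX⟩ := S19.exists_pack X' hXA.2
  obtain ⟨PA⟩ := S19.exists_pack A' hAA.2
  set φ' : C(K', X') := eX.toFun.comp (φ.comp eK.invFun) with hφ'
  set p' : C(A', X') := eX.toFun.comp (p.comp eA.invFun) with hp'
  have le1 : grelSecat φ p ≤ relSecat φ p := S19.grel_le_rel φ p
  have le2 : relSecat φ p ≤ relSecat φ' p' :=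
    S19.rel_le_of_pullback φ' p' eK.toFun φ p
      (fun V hV => S19.sect_from_model eK eX eA φ p V hV)
  have le3 : relSecat φ' p' ≤ grelSecat φ' p' := by
    apply sInf_le_sInf
    rintro n ⟨k, rfl, U, hcov, hsec⟩
    choose Ofun hOopen hOsub hOsec using fun i => S19.core PX PA φ' p' (U i) (hsec i)
    refine ⟨k, rfl, Ofun, hOopen, ?_, hOsec⟩
    apply Set.eq_univ_of_univ_subset
    rw [← hcov]
    exact Set.iUnion_mono hOsub
  have le4 : grelSecat φ' p' ≤ grelSecat φ p :=
    S19.grel_le_of_pullback φ p eK.invFun φ' p'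
      (fun V hV => S19.sect_to_model eK eX eA φ p V hV)
  exact le_antisymm (le2.trans (le3.trans le4)) le1
end
end
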